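/- arXiv:1411.7955 — 9 statements merged into one kernel-verified Lean document; each statement's English description precedes it below -/
import Mathlib

section
/- For independent real-valued random variables X and Y with cumulative distribution functions F and G respectively, and with X' an i.i.d. copy of X and Y' an i.i.d. copy of Y (all four independent), the energy distance satisfies 2∫_{-∞}^{∞} (F(x) − G(x))² dx = 2E|X−Y| − E|X−X'| − E|Y−Y'|. -/
/-!
Layer cake for the distance of two reals: `|a - b|` is the Lebesgue measure of the points `x`
separating them, i.e. with one of `a, b` at most `x` and the other above `x`. By Tonelli, for
independent `A, B` with cdfs `F, G` this gives `E|A - B| = ∫ F (1 - G) + G (1 - F)`. In the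
combination `2 E|X - Y| - E|X - X'| - E|Y - Y'|` the integrands add up to `2 (F - G) ^ 2`.
-/

open MeasureTheory ProbabilityTheory Set

lemma volume_Ico_add_volume_Ico (a b : ℝ) :
    volume (Ico a b) + volume (Ico b a) = ENNReal.ofReal |a - b| := by
  rcases le_total a b with h | h
  · simp [Real.volume_Ico, abs_of_nonpos (sub_nonpos.2 h), h]
  · simp [Real.volume_Ico, abs_of_nonneg (sub_nonneg.2 h), h]

lemma measure_Ioi_eq_ofReal_one_sub_cdf (ν : Measure ℝ) [IsProbabilityMeasure ν] (x : ℝ) :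
    ν (Ioi x) = ENNReal.ofReal (1 - cdf ν x) := by
  rw [← compl_Iic, prob_compl_eq_one_sub measurableSet_Iic, ← ofReal_cdf,
    ENNReal.ofReal_sub 1 (cdf_nonneg _ _), ENNReal.ofReal_one]

section Layercake

variable (ν ρ : Measure ℝ) [SFinite ν] [SFinite ρ]

lemma lintegral_volume_Ico_prod :
    ∫⁻ p, volume (Ico p.1 p.2) ∂(ν.prod ρ) = ∫⁻ x, ν (Iic x) * ρ (Ioi x) := by
  have hS : MeasurableSet {q : (ℝ × ℝ) × ℝ | q.1.1 ≤ q.2 ∧ q.2 < q.1.2} :=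
    (measurableSet_le measurable_fst.fst measurable_snd).inter
      (measurableSet_lt measurable_snd measurable_fst.snd)
  calc ∫⁻ p, volume (Ico p.1 p.2) ∂(ν.prod ρ)
      = ((ν.prod ρ).prod volume) {q : (ℝ × ℝ) × ℝ | q.1.1 ≤ q.2 ∧ q.2 < q.1.2} :=
        (Measure.prod_apply hS).symm
    _ = ∫⁻ x, (ν.prod ρ) (Iic x ×ˢ Ioi x) := Measure.prod_apply_symm hS
    _ = ∫⁻ x, ν (Iic x) * ρ (Ioi x) := by simp_rw [Measure.prod_prod]

lemma lintegral_abs_sub_prod :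
    ∫⁻ p, ENNReal.ofReal |p.1 - p.2| ∂(ν.prod ρ)
      = ∫⁻ x, ν (Iic x) * ρ (Ioi x) + ρ (Iic x) * ν (Ioi x) := by
  have hIco : Measurable fun p : ℝ × ℝ => volume (Ico p.1 p.2) := by
    simp_rw [Real.volume_Ico]; fun_prop
  have hIic_mul_Ioi : Measurable fun x => ν (Iic x) * ρ (Ioi x) :=
    (Monotone.measurable fun _ _ h => measure_mono (Iic_subset_Iic.2 h)).mul
      (Antitone.measurable fun _ _ h => measure_mono (Ioi_subset_Ioi h))
  simp_rw [← volume_Ico_add_volume_Ico]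
  rw [lintegral_add_left hIco, lintegral_add_left hIic_mul_Ioi, lintegral_volume_Ico_prod,
    ← lintegral_prod_swap]
  simp only [Prod.fst_swap, Prod.snd_swap, lintegral_volume_Ico_prod]

end Layercake

/-- For probability measures, the probability that independent samples of `ν` and `ρ` lie on
different sides of `x`. -/
noncomputable def straddleProb (ν ρ : Measure ℝ) (x : ℝ) : ℝ :=
  cdf ν x * (1 - cdf ρ x) + cdf ρ x * (1 - cdf ν x)

section StraddleProb

variable (ν ρ : Measure ℝ)

lemma straddleProb_nonneg (x : ℝ) : 0 ≤ straddleProb ν ρ x := by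
  have := cdf_le_one ν x
  have := cdf_le_one ρ x
  have := cdf_nonneg ν x
  have := cdf_nonneg ρ x
  unfold straddleProb
  positivity

lemma measurable_straddleProb : Measurable (straddleProb ν ρ) := by
  have := (cdf ν).mono.measurable
  have := (cdf ρ).mono.measurable
  unfold straddleProb
  fun_prop

lemma two_mul_sq_cdf_sub_cdf (x : ℝ) :
    2 * (cdf ν x - cdf ρ x) ^ 2
      = 2 * straddleProb ν ρ x - straddleProb ν ν x - straddleProb ρ ρ x := by
  unfold straddleProb
  ring

variable {ν ρ} [IsProbabilityMeasure ν] [IsProbabilityMeasure ρ]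

lemma ofReal_straddleProb (x : ℝ) :
    ENNReal.ofReal (straddleProb ν ρ x) = ν (Iic x) * ρ (Ioi x) + ρ (Iic x) * ν (Ioi x) := by
  simp only [measure_Ioi_eq_ofReal_one_sub_cdf, ← ofReal_cdf, straddleProb]
  rw [← ENNReal.ofReal_mul (cdf_nonneg _ _), ← ENNReal.ofReal_mul (cdf_nonneg _ _),
    ENNReal.ofReal_add (mul_nonneg (cdf_nonneg _ _) (sub_nonneg.2 (cdf_le_one _ _)))
      (mul_nonneg (cdf_nonneg _ _) (sub_nonneg.2 (cdf_le_one _ _)))]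

lemma lintegral_abs_sub_prod_eq_straddleProb :
    ∫⁻ p, ENNReal.ofReal |p.1 - p.2| ∂(ν.prod ρ) = ∫⁻ x, ENNReal.ofReal (straddleProb ν ρ x) := by
  simp_rw [lintegral_abs_sub_prod, ofReal_straddleProb]

lemma integral_abs_sub_prod_eq_straddleProb :
    ∫ p, |p.1 - p.2| ∂(ν.prod ρ) = ∫ x, straddleProb ν ρ x := by
  rw [integral_eq_lintegral_of_nonneg_ae (.of_forall fun _ => abs_nonneg _) (by fun_prop),
    integral_eq_lintegral_of_nonneg_ae (.of_forall (straddleProb_nonneg ν ρ))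
      (measurable_straddleProb ν ρ).aestronglyMeasurable, lintegral_abs_sub_prod_eq_straddleProb]

lemma integrable_straddleProb (hν : Integrable id ν) (hρ : Integrable id ρ) :
    Integrable (straddleProb ν ρ) := by
  have habs : Integrable (fun p : ℝ × ℝ => |p.1 - p.2|) (ν.prod ρ) :=
    ((hν.comp_fst ρ).sub (hρ.comp_snd ν)).abs
  refine ⟨(measurable_straddleProb ν ρ).aestronglyMeasurable, ?_⟩
  rw [hasFiniteIntegral_iff_ofReal (.of_forall (straddleProb_nonneg ν ρ)),
    ← lintegral_abs_sub_prod_eq_straddleProb]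
  exact (hasFiniteIntegral_iff_ofReal (.of_forall fun _ => abs_nonneg _)).1 habs.hasFiniteIntegral

end StraddleProb

lemma ProbabilityTheory.IndepFun.integral_abs_sub {Ω : Type*} [MeasurableSpace Ω]
    {μ : Measure Ω} [IsProbabilityMeasure μ] {A B : Ω → ℝ} (hA : AEMeasurable A μ)
    (hB : AEMeasurable B μ) (h : IndepFun A B μ) :
    ∫ ω, |A ω - B ω| ∂μ = ∫ x, straddleProb (μ.map A) (μ.map B) x := by
  have := Measure.isProbabilityMeasure_map hA
  have := Measure.isProbabilityMeasure_map hB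
  rw [← integral_abs_sub_prod_eq_straddleProb,
    ← (indepFun_iff_map_prod_eq_prod_map_map hA hB).1 h, integral_map (hA.prodMk hB) (by fun_prop)]

theorem energy_distance_eq_L2_dist_cdf
    {Ω : Type*} [MeasurableSpace Ω] {μ : Measure Ω} [IsProbabilityMeasure μ]
    (X X' Y Y' : Ω → ℝ)
    (hX : Measurable X) (hX' : Measurable X') (hY : Measurable Y) (hY' : Measurable Y')
    (hindep : iIndepFun ![X, X', Y, Y'] μ)
    (hXX' : μ.map X = μ.map X') (hYY' : μ.map Y = μ.map Y')
    (hXint : Integrable X μ) (hYint : Integrable Y μ) :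
    2 * ∫ x : ℝ, ((cdf (μ.map X) x : ℝ) - cdf (μ.map Y) x) ^ 2
      = 2 * (∫ ω, |X ω - Y ω| ∂μ) - (∫ ω, |X ω - X' ω| ∂μ) - ∫ ω, |Y ω - Y' ω| ∂μ := by
  have := Measure.isProbabilityMeasure_map hX.aemeasurable (μ := μ)
  have := Measure.isProbabilityMeasure_map hY.aemeasurable (μ := μ)
  have hXlaw : Integrable id (μ.map X) :=
    (integrable_map_measure aestronglyMeasurable_id hX.aemeasurable).2 hXint
  have hYlaw : Integrable id (μ.map Y) :=
    (integrable_map_measure aestronglyMeasurable_id hY.aemeasurable).2 hYint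
  have hFG := integrable_straddleProb hXlaw hYlaw
  have hFF := integrable_straddleProb hXlaw hXlaw
  have hGG := integrable_straddleProb hYlaw hYlaw
  have hXY : IndepFun X Y μ := by simpa using hindep.indepFun (i := 0) (j := 2) (by decide)
  have hXX'i : IndepFun X X' μ := by simpa using hindep.indepFun (i := 0) (j := 1) (by decide)
  have hYY'i : IndepFun Y Y' μ := by simpa using hindep.indepFun (i := 2) (j := 3) (by decide)
  calc 2 * ∫ x, ((cdf (μ.map X) x : ℝ) - cdf (μ.map Y) x) ^ 2
      = ∫ x, 2 * straddleProb (μ.map X) (μ.map Y) x - straddleProb (μ.map X) (μ.map X) x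
          - straddleProb (μ.map Y) (μ.map Y) x := by
        simp_rw [← integral_const_mul, two_mul_sq_cdf_sub_cdf]
    _ = 2 * (∫ x, straddleProb (μ.map X) (μ.map Y) x)
          - (∫ x, straddleProb (μ.map X) (μ.map X) x) - ∫ x, straddleProb (μ.map Y) (μ.map Y) x := by
        rw [integral_sub, integral_sub, integral_const_mul] <;> fun_prop
    _ = _ := by
        rw [hXY.integral_abs_sub hX.aemeasurable hY.aemeasurable,
          hXX'i.integral_abs_sub hX.aemeasurable hX'.aemeasurable,
          hYY'i.integral_abs_sub hY.aemeasurable hY'.aemeasurable, ← hXX', ← hYY']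
end

section
/- For independent real-valued random variables X and Y with E|X| + E|Y| < ∞, the energy distance ℰ(X,Y) = 2E|X−Y| − E|X−X'| − E|Y−Y'| is nonnegative. -/
/-!
`|z - w|` is the Lebesgue measure of the set of `t` lying on exactly one side of `z` and `w`, so
by Tonelli and independence `E|Z - W| = ∫ F (1 - G) + G (1 - F) dt`, where `F`, `G` are the
distribution functions of `Z`, `W`. Hence `2 E|X - Y| - E|X - X'| - E|Y - Y'| = 2 ∫ (F - G)² dt`.
Working in `ℝ≥0∞` makes Tonelli unconditional.
-/

open MeasureTheory ProbabilityTheory Set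
open scoped ENNReal symmDiff

lemma Real.volume_Ici_symmDiff_Ici (z w : ℝ) :
    volume (Ici z ∆ Ici w) = ENNReal.ofReal |z - w| := by
  have : Ici z ∆ Ici w = Ico (min z w) (max z w) := by
    ext t
    simp only [mem_symmDiff, mem_Ici, mem_Ico, min_le_iff, lt_max_iff]
    constructor <;> intro h <;> rcases le_total z w with hzw | hzw <;> grind
  rw [this, Real.volume_Ico, max_sub_min_eq_abs']

lemma ENNReal.mul_one_sub_add_mul_one_sub_le {a c : ℝ≥0∞} (ha : a ≤ 1) (hc : c ≤ 1) :
    a * (1 - a) + c * (1 - c) ≤ a * (1 - c) + c * (1 - a) := by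
  have ha_top : a ≠ ∞ := ne_top_of_le_ne_top one_ne_top ha
  have hc_top : c ≠ ∞ := ne_top_of_le_ne_top one_ne_top hc
  rw [← ENNReal.toReal_le_toReal (by finiteness) (by finiteness),
    toReal_add (by finiteness) (by finiteness), toReal_add (by finiteness) (by finiteness)]
  have ha_one := ENNReal.toReal_le_of_le_ofReal zero_le_one (by simpa using ha)
  have hc_one := ENNReal.toReal_le_of_le_ofReal zero_le_one (by simpa using hc)
  simp only [toReal_mul, toReal_sub_of_le ha one_ne_top, toReal_sub_of_le hc one_ne_top,
    toReal_one]
  nlinarith [sq_nonneg (a.toReal - c.toReal)]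

section

variable {Ω : Type*} [MeasurableSpace Ω] {μ : Measure Ω} {Z W : Ω → ℝ}

lemma lintegral_ofReal_abs_sub_eq_lintegral_measure_symmDiff [SFinite μ]
    (hZ : Measurable Z) (hW : Measurable W) :
    ∫⁻ ω, ENNReal.ofReal |Z ω - W ω| ∂μ = ∫⁻ t, μ ((Z ⁻¹' Iic t) ∆ (W ⁻¹' Iic t)) := by
  have hS : MeasurableSet ({p : Ω × ℝ | Z p.1 ≤ p.2} ∆ {p | W p.1 ≤ p.2}) :=
    (measurableSet_le (hZ.comp measurable_fst) measurable_snd).symmDiff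
      (measurableSet_le (hW.comp measurable_fst) measurable_snd)
  calc ∫⁻ ω, ENNReal.ofReal |Z ω - W ω| ∂μ
      = μ.prod volume ({p : Ω × ℝ | Z p.1 ≤ p.2} ∆ {p | W p.1 ≤ p.2}) := by
        simp_rw [Measure.prod_apply hS, ← Real.volume_Ici_symmDiff_Ici]
        rfl
    _ = ∫⁻ t, μ ((Z ⁻¹' Iic t) ∆ (W ⁻¹' Iic t)) := Measure.prod_apply_symm hS

lemma ProbabilityTheory.IndepFun.measure_preimage_symmDiff (h : IndepFun Z W μ)
    (hZ : Measurable Z) (hW : Measurable W) {s t : Set ℝ} (hs : MeasurableSet s)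
    (ht : MeasurableSet t) :
    μ ((Z ⁻¹' s) ∆ (W ⁻¹' t)) = μ (Z ⁻¹' s) * μ (W ⁻¹' tᶜ) + μ (W ⁻¹' t) * μ (Z ⁻¹' sᶜ) := by
  rw [measure_symmDiff_eq (hZ hs).nullMeasurableSet (hW ht).nullMeasurableSet, sdiff_eq,
    sdiff_eq, ← preimage_compl, ← preimage_compl,
    h.measure_inter_preimage_eq_mul _ _ hs ht.compl,
    h.symm.measure_inter_preimage_eq_mul _ _ ht hs.compl]

noncomputable def expectedAbsDiff (P Q : Measure ℝ) : ℝ≥0∞ :=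
  ∫⁻ t, P (Iic t) * Q (Ioi t) + Q (Iic t) * P (Ioi t)

lemma lintegral_ofReal_abs_sub_eq_expectedAbsDiff [SFinite μ] (h : IndepFun Z W μ)
    (hZ : Measurable Z) (hW : Measurable W) :
    ∫⁻ ω, ENNReal.ofReal |Z ω - W ω| ∂μ = expectedAbsDiff (μ.map Z) (μ.map W) := by
  rw [lintegral_ofReal_abs_sub_eq_lintegral_measure_symmDiff hZ hW, expectedAbsDiff]
  refine lintegral_congr fun t => ?_
  rw [h.measure_preimage_symmDiff hZ hW measurableSet_Iic measurableSet_Iic, compl_Iic,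
    Measure.map_apply hZ measurableSet_Iic, Measure.map_apply hZ measurableSet_Ioi,
    Measure.map_apply hW measurableSet_Iic, Measure.map_apply hW measurableSet_Ioi]

end

lemma expectedAbsDiff_self_add_expectedAbsDiff_self_le (P Q : Measure ℝ)
    [IsProbabilityMeasure P] [IsProbabilityMeasure Q] :
    expectedAbsDiff P P + expectedAbsDiff Q Q ≤ 2 * expectedAbsDiff P Q := by
  unfold expectedAbsDiff
  calc (∫⁻ t, P (Iic t) * P (Ioi t) + P (Iic t) * P (Ioi t))
        + ∫⁻ t, Q (Iic t) * Q (Ioi t) + Q (Iic t) * Q (Ioi t)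
      ≤ ∫⁻ t, (P (Iic t) * P (Ioi t) + P (Iic t) * P (Ioi t))
        + (Q (Iic t) * Q (Ioi t) + Q (Iic t) * Q (Ioi t)) := le_lintegral_add _ _
    _ ≤ ∫⁻ t, 2 * (P (Iic t) * Q (Ioi t) + Q (Iic t) * P (Ioi t)) := by
        refine lintegral_mono fun t => ?_
        simp only [← compl_Iic, prob_compl_eq_one_sub (μ := P) measurableSet_Iic,
          prob_compl_eq_one_sub (μ := Q) measurableSet_Iic, ← two_mul, ← mul_add]
        gcongr 2 * ?_
        exact ENNReal.mul_one_sub_add_mul_one_sub_le prob_le_one prob_le_one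
    _ = 2 * ∫⁻ t, P (Iic t) * Q (Ioi t) + Q (Iic t) * P (Ioi t) :=
        lintegral_const_mul' _ _ ENNReal.ofNat_ne_top

theorem energy_distance_nonneg
    {Ω : Type*} [MeasurableSpace Ω] {μ : Measure Ω} [IsProbabilityMeasure μ]
    (X X' Y Y' : Ω → ℝ)
    (hX : Measurable X) (hX' : Measurable X') (hY : Measurable Y) (hY' : Measurable Y')
    (hindep : iIndepFun ![X, X', Y, Y'] μ)
    (hXX' : μ.map X = μ.map X') (hYY' : μ.map Y = μ.map Y')
    (hXint : Integrable X μ) (hYint : Integrable Y μ) :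
    0 ≤ 2 * (∫ ω, |X ω - Y ω| ∂μ) - (∫ ω, |X ω - X' ω| ∂μ) - ∫ ω, |Y ω - Y' ω| ∂μ := by
  have indep_XY : IndepFun X Y μ := by
    simpa using hindep.indepFun (show (0 : Fin 4) ≠ 2 by decide)
  have indep_XX' : IndepFun X X' μ := by
    simpa using hindep.indepFun (show (0 : Fin 4) ≠ 1 by decide)
  have indep_YY' : IndepFun Y Y' μ := by
    simpa using hindep.indepFun (show (2 : Fin 4) ≠ 3 by decide)
  have := Measure.isProbabilityMeasure_map (μ := μ) hX.aemeasurable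
  have := Measure.isProbabilityMeasure_map (μ := μ) hY.aemeasurable
  have key : ∫⁻ ω, ENNReal.ofReal |X ω - X' ω| ∂μ + ∫⁻ ω, ENNReal.ofReal |Y ω - Y' ω| ∂μ
      ≤ 2 * ∫⁻ ω, ENNReal.ofReal |X ω - Y ω| ∂μ := by
    rw [lintegral_ofReal_abs_sub_eq_expectedAbsDiff indep_XX' hX hX',
      lintegral_ofReal_abs_sub_eq_expectedAbsDiff indep_YY' hY hY',
      lintegral_ofReal_abs_sub_eq_expectedAbsDiff indep_XY hX hY, ← hXX', ← hYY']
    exact expectedAbsDiff_self_add_expectedAbsDiff_self_le _ _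
  have hXY_fin : ∫⁻ ω, ENNReal.ofReal |X ω - Y ω| ∂μ ≠ ∞ :=
    (hXint.sub hYint).abs.lintegral_lt_top.ne
  obtain ⟨hXX'_fin, hYY'_fin⟩ := ENNReal.add_ne_top.mp (ne_top_of_le_ne_top (by finiteness) key)
  have key_real := ENNReal.toReal_mono (by finiteness) key
  rw [ENNReal.toReal_add hXX'_fin hYY'_fin, ENNReal.toReal_mul, ENNReal.toReal_ofNat] at key_real
  have integral_eq {Z W : Ω → ℝ} (hZ : Measurable Z) (hW : Measurable W) :
      ∫ ω, |Z ω - W ω| ∂μ = (∫⁻ ω, ENNReal.ofReal |Z ω - W ω| ∂μ).toReal :=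
    integral_eq_lintegral_of_nonneg_ae (ae_of_all _ fun _ => abs_nonneg _)
      (hZ.sub hW).abs.aestronglyMeasurable
  rw [integral_eq hX hY, integral_eq hX hX', integral_eq hY hY']
  linarith
end

section
/- For independent integrable real-valued random variables X and Y, the energy distance ℰ(X,Y) = 2E|X−Y| − E|X−X'| − E|Y−Y'| equals zero if and only if X and Y have the same distribution. -/
/-!
For `t ∈ ℝ`, `|x - y|` is the Lebesgue measure of the set of `t` separating `x` and `y`, so by
Tonelli and independence `E|U - V| = ∫ P(t separates U and V) dt = ∫ F(1 - G) + (1 - F)G`, where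
`F, G` are the distribution functions of `U, V`. Combining the three such integrals, the energy
distance becomes `2 ∫ (F - G)²`, which vanishes iff `F = G` almost everywhere, hence everywhere
by right-continuity, i.e. iff `X` and `Y` have the same law.
-/

open MeasureTheory ProbabilityTheory Set Filter Topology

theorem eq_of_ae_eq_of_rightContinuous {α Y : Type*} [TopologicalSpace α] [LinearOrder α]
    [OrderTopology α] [DenselyOrdered α] [NoMaxOrder α] [MeasurableSpace α] {μ : Measure α}
    [μ.IsOpenPosMeasure] [TopologicalSpace Y] [T2Space Y] {f g : α → Y}
    (hf : ∀ x, ContinuousWithinAt f (Ici x) x) (hg : ∀ x, ContinuousWithinAt g (Ici x) x)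
    (h : f =ᵐ[μ] g) : f = g := by
  funext x
  set D := Ioi x ∩ {y | f y = g y}
  have hx : x ∈ closure D := by
    have := closure_mono ((Measure.dense_of_ae h).open_subset_closure_inter (isOpen_Ioi (a := x)))
    rw [closure_Ioi, closure_closure] at this
    exact this self_mem_Ici
  have : (𝓝[D] x).NeBot := mem_closure_iff_nhdsWithin_neBot.mp hx
  have hD : D ⊆ Ici x := fun y hy => le_of_lt hy.1
  exact tendsto_nhds_unique_of_eventuallyEq ((hf x).mono hD) ((hg x).mono hD)
    (eventually_mem_nhdsWithin.mono fun y hy => hy.2)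

def separatingPairs (t : ℝ) : Set (ℝ × ℝ) := Iic t ×ˢ Ioi t ∪ Ioi t ×ˢ Iic t

theorem measurableSet_setOf_mem_separatingPairs :
    MeasurableSet {q : (ℝ × ℝ) × ℝ | q.1 ∈ separatingPairs q.2} := by
  simp only [separatingPairs, mem_union, mem_prod, mem_Iic, mem_Ioi]
  measurability

theorem volume_setOf_mem_separatingPairs (p : ℝ × ℝ) :
    volume {t | p ∈ separatingPairs t} = ENNReal.ofReal |p.1 - p.2| := by
  have : {t | p ∈ separatingPairs t} = Ico p.1 p.2 ∪ Ico p.2 p.1 := by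
    ext t; simp [separatingPairs, and_comm]
  rw [this, Ico_union_Ico' le_rfl le_rfl, Real.volume_Ico, max_comm, max_sub_min_eq_abs']

theorem lintegral_ofReal_abs_sub_prod (ν ρ : Measure ℝ) [SFinite ν] [SFinite ρ] :
    ∫⁻ p, ENNReal.ofReal |p.1 - p.2| ∂ν.prod ρ = ∫⁻ t, ν.prod ρ (separatingPairs t) := by
  simp_rw [← volume_setOf_mem_separatingPairs]
  exact (Measure.prod_apply (ν := volume) measurableSet_setOf_mem_separatingPairs).symm.trans
    (Measure.prod_apply_symm measurableSet_setOf_mem_separatingPairs)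

theorem measurable_measureReal_prod_separatingPairs (ν ρ : Measure ℝ) [SFinite ν] [SFinite ρ] :
    Measurable fun t => (ν.prod ρ).real (separatingPairs t) :=
  (measurable_measure_prodMk_right measurableSet_setOf_mem_separatingPairs).ennreal_toReal

theorem measureReal_prod_separatingPairs (ν ρ : Measure ℝ) [IsProbabilityMeasure ν]
    [IsProbabilityMeasure ρ] (t : ℝ) :
    (ν.prod ρ).real (separatingPairs t) =
      cdf ν t * (1 - cdf ρ t) + (1 - cdf ν t) * cdf ρ t := by
  rw [separatingPairs, measureReal_union (disjoint_prod.mpr (Or.inl (Iic_disjoint_Ioi le_rfl)))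
    (measurableSet_Ioi.prod measurableSet_Iic), measureReal_prod_prod, measureReal_prod_prod,
    ← compl_Iic, probReal_compl_eq_one_sub measurableSet_Iic,
    probReal_compl_eq_one_sub measurableSet_Iic, cdf_eq_real, cdf_eq_real]

theorem integral_sq_sub_cdf_eq_zero_iff (ν ρ : Measure ℝ) [IsProbabilityMeasure ν]
    [IsProbabilityMeasure ρ] (h : Integrable fun t => (cdf ν t - cdf ρ t) ^ 2) :
    ∫ t, (cdf ν t - cdf ρ t) ^ 2 = 0 ↔ ν = ρ := by
  rw [integral_eq_zero_iff_of_nonneg (fun t => sq_nonneg _) h]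
  refine ⟨fun h0 => Measure.eq_of_cdf ν ρ (StieltjesFunction.ext fun t => ?_),
    fun h => h ▸ ae_of_all _ fun t => by simp⟩
  refine congrFun (eq_of_ae_eq_of_rightContinuous (μ := volume) (cdf ν).right_continuous
    (cdf ρ).right_continuous ?_) t
  filter_upwards [h0] with t ht
  exact sub_eq_zero.mp (pow_eq_zero_iff two_ne_zero |>.mp ht)

theorem energy_eq_zero_iff (ν ρ : Measure ℝ) [IsProbabilityMeasure ν] [IsProbabilityMeasure ρ]
    (hνρ : Integrable fun t => (ν.prod ρ).real (separatingPairs t))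
    (hνν : Integrable fun t => (ν.prod ν).real (separatingPairs t))
    (hρρ : Integrable fun t => (ρ.prod ρ).real (separatingPairs t)) :
    2 * (∫ t, (ν.prod ρ).real (separatingPairs t)) - (∫ t, (ν.prod ν).real (separatingPairs t))
      - (∫ t, (ρ.prod ρ).real (separatingPairs t)) = 0 ↔ ν = ρ := by
  have hpt : (fun t => 2 * (ν.prod ρ).real (separatingPairs t)
      - (ν.prod ν).real (separatingPairs t) - (ρ.prod ρ).real (separatingPairs t))
      = fun t => 2 * (cdf ν t - cdf ρ t) ^ 2 := by
    funext t
    simp only [measureReal_prod_separatingPairs]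
    ring
  have hint : Integrable fun t => 2 * (cdf ν t - cdf ρ t) ^ 2 :=
    hpt ▸ ((hνρ.const_mul 2).sub hνν).sub hρρ
  have hsplit : 2 * (∫ t, (ν.prod ρ).real (separatingPairs t))
      - (∫ t, (ν.prod ν).real (separatingPairs t)) - (∫ t, (ρ.prod ρ).real (separatingPairs t))
      = ∫ t, 2 * (cdf ν t - cdf ρ t) ^ 2 := by
    rw [← hpt, integral_sub _ hρρ, integral_sub (hνρ.const_mul 2) hνν, integral_const_mul]
    exact (hνρ.const_mul 2).sub hνν
  rw [hsplit, integral_const_mul, mul_eq_zero, or_iff_right two_ne_zero,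
    integral_sq_sub_cdf_eq_zero_iff ν ρ
      ((integrable_const_mul_iff (isUnit_iff_ne_zero.mpr two_ne_zero) _).mp hint)]

section Independent

variable {Ω : Type*} [MeasurableSpace Ω] {μ : Measure Ω} {U V : Ω → ℝ}

theorem ProbabilityTheory.IndepFun.lintegral_ofReal_abs_sub [IsFiniteMeasure μ]
    (hUV : IndepFun U V μ) (hU : AEMeasurable U μ) (hV : AEMeasurable V μ) :
    ∫⁻ ω, ENNReal.ofReal |U ω - V ω| ∂μ =
      ∫⁻ t, ENNReal.ofReal (((μ.map U).prod (μ.map V)).real (separatingPairs t)) := by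
  simp only [measureReal_def, ENNReal.ofReal_toReal (measure_ne_top _ _)]
  rw [← lintegral_ofReal_abs_sub_prod, ← hUV.map_prod_eq_prod_map_map hU hV,
    lintegral_map' (by fun_prop) (hU.prodMk hV)]

theorem ProbabilityTheory.IndepFun.integrable_measureReal_separatingPairs [IsFiniteMeasure μ]
    (hUV : IndepFun U V μ) (hU : AEMeasurable U μ) (hV : AEMeasurable V μ)
    (hUi : Integrable U μ) (hVi : Integrable V μ) :
    Integrable fun t => ((μ.map U).prod (μ.map V)).real (separatingPairs t) := by
  refine ⟨(measurable_measureReal_prod_separatingPairs _ _).aestronglyMeasurable, ?_⟩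
  rw [hasFiniteIntegral_iff_ofReal (ae_of_all _ fun t => measureReal_nonneg),
    ← hUV.lintegral_ofReal_abs_sub hU hV]
  exact (hUi.sub hVi).abs.lintegral_lt_top

theorem ProbabilityTheory.IndepFun.integral_abs_sub_s2 [IsFiniteMeasure μ]
    (hUV : IndepFun U V μ) (hU : AEMeasurable U μ) (hV : AEMeasurable V μ) :
    ∫ ω, |U ω - V ω| ∂μ = ∫ t, ((μ.map U).prod (μ.map V)).real (separatingPairs t) := by
  rw [integral_eq_lintegral_of_nonneg_ae (ae_of_all _ fun ω => abs_nonneg _) (by fun_prop),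
    integral_eq_lintegral_of_nonneg_ae (ae_of_all _ fun t => measureReal_nonneg)
      (measurable_measureReal_prod_separatingPairs _ _).aestronglyMeasurable,
    hUV.lintegral_ofReal_abs_sub hU hV]

end Independent

theorem energy_distance_eq_zero_iff
    {Ω : Type*} [MeasurableSpace Ω] {μ : Measure Ω} [IsProbabilityMeasure μ]
    (X X' Y Y' : Ω → ℝ)
    (hX : Measurable X) (hX' : Measurable X') (hY : Measurable Y) (hY' : Measurable Y')
    (hindep : iIndepFun ![X, X', Y, Y'] μ)
    (hXX' : μ.map X = μ.map X') (hYY' : μ.map Y = μ.map Y')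
    (hXint : Integrable X μ) (hYint : Integrable Y μ) :
    2 * (∫ ω, |X ω - Y ω| ∂μ) - (∫ ω, |X ω - X' ω| ∂μ) - (∫ ω, |Y ω - Y' ω| ∂μ) = 0
      ↔ μ.map X = μ.map Y := by
  have hX'int : Integrable X' μ :=
    (IdentDistrib.integrable_iff ⟨hX.aemeasurable, hX'.aemeasurable, hXX'⟩).mp hXint
  have hY'int : Integrable Y' μ :=
    (IdentDistrib.integrable_iff ⟨hY.aemeasurable, hY'.aemeasurable, hYY'⟩).mp hYint
  have iXY : IndepFun X Y μ := hindep.indepFun (i := 0) (j := 2) (by decide)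
  have iXX' : IndepFun X X' μ := hindep.indepFun (i := 0) (j := 1) (by decide)
  have iYY' : IndepFun Y Y' μ := hindep.indepFun (i := 2) (j := 3) (by decide)
  have := Measure.isProbabilityMeasure_map (μ := μ) hX.aemeasurable
  have := Measure.isProbabilityMeasure_map (μ := μ) hY.aemeasurable
  rw [iXY.integral_abs_sub_s2 hX.aemeasurable hY.aemeasurable,
    iXX'.integral_abs_sub_s2 hX.aemeasurable hX'.aemeasurable,
    iYY'.integral_abs_sub_s2 hY.aemeasurable hY'.aemeasurable, ← hXX', ← hYY']
  refine energy_eq_zero_iff _ _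
    (iXY.integrable_measureReal_separatingPairs hX.aemeasurable hY.aemeasurable hXint hYint) ?_ ?_
  · simpa only [← hXX'] using
      iXX'.integrable_measureReal_separatingPairs hX.aemeasurable hX'.aemeasurable hXint hX'int
  · simpa only [← hYY'] using
      iYY'.integrable_measureReal_separatingPairs hY.aemeasurable hY'.aemeasurable hYint hY'int
end

section
/- For independent integrable real-valued random variables X and Y with characteristic functions φ_X and φ_Y, the energy distance satisfies ℰ(X,Y) = ∫_{−∞}^{∞} |φ_X(t) − φ_Y(t)|² / (π t²) dt. -/
/-!
For every real `a`, `∫ (1 - cos (t a)) / (π t²) dt = |a|`; the case `a = 1` follows from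
`1 / x² = ∫₀^∞ s e^{-xs} ds` and Tonelli, since `∫₀^∞ (1 - cos x) e^{-sx} dx = 1 / (s (1 + s²))`.
Integrating against the law of `W` and swapping the integrals once more gives
`E|W| = ∫ (1 - Re φ_W(t)) / (π t²) dt`. For independent `U`, `V` we have
`φ_{U-V} = φ_U · conj φ_V`, so for `W = X - Y, X - X', Y - Y'` the three integrands combine into
`‖φ_X - φ_Y‖² / (π t²)`.
-/

open MeasureTheory ProbabilityTheory Real Complex
open scoped ENNReal

noncomputable section

open Set ComplexConjugate

lemma lintegral_Ioi_one_sub_cos_mul_exp_neg {s : ℝ} (hs : 0 < s) :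
    ∫⁻ x in Ioi 0, ENNReal.ofReal ((1 - Real.cos x) * rexp (-(s * x)))
      = ENNReal.ofReal (1 / (s * (1 + s ^ 2))) := by
  have hre : ∀ x : ℝ, (1 - Real.cos x) * rexp (-(s * x))
      = (cexp ((-s : ℂ) * x) - cexp ((-s + I) * x)).re := fun x => by
    simp [Complex.exp_re, Complex.mul_re, Complex.mul_im, sub_mul, mul_comm (Real.cos x)]
  have h1 := integrableOn_exp_mul_complex_Ioi (a := -s) (by simpa using hs) 0
  have h2 := integrableOn_exp_mul_complex_Ioi (a := -s + I) (by simpa using hs) 0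
  have hint : IntegrableOn (fun x => (1 - Real.cos x) * rexp (-(s * x))) (Ioi 0) := by
    simp_rw [hre]; exact (h1.sub h2).re
  have hI := integral_re (h1.sub h2)
  simp only [Pi.sub_apply, RCLike.re_to_complex] at hI
  rw [← ofReal_integral_eq_lintegral_ofReal hint (ae_of_all _ fun x =>
      mul_nonneg (sub_nonneg.2 (cos_le_one x)) (exp_nonneg _))]
  simp_rw [hre]
  rw [hI, integral_sub h1 h2, integral_exp_mul_complex_Ioi (by simpa using hs),
    integral_exp_mul_complex_Ioi (by simpa using hs)]
  congr 1
  simp only [ofReal_zero, mul_zero, Complex.exp_zero, neg_div_neg_eq, one_div, sub_re, inv_re,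
    ofReal_re, normSq_apply, ofReal_im, add_zero, div_self_mul_self', div_re, neg_re, one_re,
    add_re, I_re, mul_neg, neg_mul, one_mul, neg_neg, add_im, neg_im, neg_zero, I_im, zero_add,
    mul_one, one_im, zero_div, mul_inv_rev]
  field_simp
  ring

lemma lintegral_Ioi_mul_exp_neg_mul {x : ℝ} (hx : 0 < x) :
    ∫⁻ s in Ioi 0, ENNReal.ofReal (s * rexp (-(x * s))) = ENNReal.ofReal (1 / x ^ 2) := by
  have hint : IntegrableOn (fun s => s * rexp (-(x * s))) (Ioi 0) := by
    simpa using integrableOn_rpow_mul_exp_neg_mul_rpow (p := 1) (s := 1) (b := x) (by norm_num)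
      one_pos hx
  have hval : ∫ s in Ioi 0, s * rexp (-(x * s)) = 1 / x ^ 2 := by
    convert integral_rpow_mul_exp_neg_mul_Ioi two_pos hx using 1
    · norm_num
    · rw [Real.Gamma_two, mul_one, Real.rpow_two, div_pow, one_pow]
  rw [← ofReal_integral_eq_lintegral_ofReal hint ((ae_restrict_iff' measurableSet_Ioi).2
    (ae_of_all _ fun s hs => mul_nonneg (le_of_lt hs) (exp_nonneg _))), hval]

lemma lintegral_Ioi_one_sub_cos_div_sq :
    ∫⁻ x in Ioi 0, ENNReal.ofReal ((1 - Real.cos x) / x ^ 2) = ENNReal.ofReal (π / 2) := by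
  set F : ℝ → ℝ → ℝ≥0∞ := fun x s =>
    ENNReal.ofReal (1 - Real.cos x) * ENNReal.ofReal (s * rexp (-(x * s))) with hF
  have hF_meas : Measurable (Function.uncurry F) := by fun_prop
  have inner_s : ∀ x ∈ Ioi (0 : ℝ),
      ∫⁻ s in Ioi 0, F x s = ENNReal.ofReal ((1 - Real.cos x) / x ^ 2) := fun x hx => by
    rw [lintegral_const_mul' _ _ ENNReal.ofReal_ne_top, lintegral_Ioi_mul_exp_neg_mul hx,
      ← ENNReal.ofReal_mul (sub_nonneg.2 (cos_le_one x)), mul_one_div]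
  have inner_x : ∀ s ∈ Ioi (0 : ℝ),
      ∫⁻ x in Ioi 0, F x s = ENNReal.ofReal (1 + s ^ 2)⁻¹ := fun s hs => by
    have hs : (0 : ℝ) < s := hs
    have hFs : ∀ x, F x s = ENNReal.ofReal s
        * ENNReal.ofReal ((1 - Real.cos x) * rexp (-(s * x))) := fun x => by
      simp only [hF]
      rw [← ENNReal.ofReal_mul (sub_nonneg.2 (cos_le_one x)), ← ENNReal.ofReal_mul hs.le]
      ring_nf
    simp_rw [hFs]
    rw [lintegral_const_mul' _ _ ENNReal.ofReal_ne_top, lintegral_Ioi_one_sub_cos_mul_exp_neg hs,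
      ← ENNReal.ofReal_mul hs.le]
    congr 1
    field_simp
  calc ∫⁻ x in Ioi 0, ENNReal.ofReal ((1 - Real.cos x) / x ^ 2)
      = ∫⁻ x in Ioi 0, ∫⁻ s in Ioi 0, F x s :=
        (setLIntegral_congr_fun measurableSet_Ioi inner_s).symm
    _ = ∫⁻ s in Ioi 0, ∫⁻ x in Ioi 0, F x s := lintegral_lintegral_swap hF_meas.aemeasurable
    _ = ∫⁻ s in Ioi 0, ENNReal.ofReal (1 + s ^ 2)⁻¹ :=
        setLIntegral_congr_fun measurableSet_Ioi inner_x
    _ = ENNReal.ofReal (π / 2) := by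
        rw [← ofReal_integral_eq_lintegral_ofReal integrable_inv_one_add_sq.integrableOn
          (ae_of_all _ fun s => by positivity), integral_Ioi_inv_one_add_sq, arctan_zero, sub_zero]

lemma integral_Ioi_one_sub_cos_div_sq : ∫ x in Ioi 0, (1 - Real.cos x) / x ^ 2 = π / 2 := by
  rw [integral_eq_lintegral_of_nonneg_ae
      (ae_of_all _ fun x => div_nonneg (sub_nonneg.2 (cos_le_one x)) (sq_nonneg x))
      (by fun_prop : Measurable fun x : ℝ => (1 - Real.cos x) / x ^ 2).aestronglyMeasurable,
    lintegral_Ioi_one_sub_cos_div_sq, ENNReal.toReal_ofReal (by positivity)]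

lemma integral_one_sub_cos_div_sq : ∫ x, (1 - Real.cos x) / x ^ 2 = π := by
  calc ∫ x, (1 - Real.cos x) / x ^ 2 = ∫ x, (1 - Real.cos |x|) / |x| ^ 2 := by
        simp only [cos_abs, sq_abs]
    _ = π := by rw [integral_comp_abs (f := fun x => (1 - Real.cos x) / x ^ 2),
        integral_Ioi_one_sub_cos_div_sq]; ring

lemma integral_one_sub_cos_mul_div_sq (a : ℝ) :
    ∫ t, (1 - Real.cos (t * a)) / (π * t ^ 2) = |a| := by
  rcases eq_or_ne a 0 with rfl | ha
  · simp
  have hscale : ∀ t, (1 - Real.cos (t * a)) / (π * t ^ 2)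
      = a ^ 2 / π * ((1 - Real.cos (a * t)) / (a * t) ^ 2) := fun t => by
    rcases eq_or_ne t 0 with rfl | ht
    · simp
    · field_simp
  simp_rw [hscale]
  rw [integral_const_mul, Measure.integral_comp_mul_left (fun x => (1 - Real.cos x) / x ^ 2),
    integral_one_sub_cos_div_sq, smul_eq_mul, abs_inv, ← sq_abs a]
  field_simp

lemma lintegral_one_sub_cos_mul_div_sq (a : ℝ) :
    ∫⁻ t, ENNReal.ofReal ((1 - Real.cos (t * a)) / (π * t ^ 2)) = ENNReal.ofReal |a| := by
  have hint : Integrable fun t => (1 - Real.cos (t * a)) / (π * t ^ 2) := by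
    rcases eq_or_ne a 0 with rfl | ha
    · simp
    -- a non-integrable function would have integral `0`
    · exact Integrable.of_integral_ne_zero (by simpa [integral_one_sub_cos_mul_div_sq] using ha)
  rw [← ofReal_integral_eq_lintegral_ofReal hint
    (ae_of_all _ fun t => div_nonneg (sub_nonneg.2 (cos_le_one _)) (by positivity)),
    integral_one_sub_cos_mul_div_sq]

lemma one_sub_re_charFun (ν : Measure ℝ) [IsProbabilityMeasure ν] (t : ℝ) :
    1 - (charFun ν t).re = ∫ x, (1 - Real.cos (t * x)) ∂ν := by
  have hint : Integrable (fun x : ℝ => cexp (t * x * I)) ν :=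
    (integrable_const (1 : ℝ)).mono' (by fun_prop) (ae_of_all _ fun x => by
      rw [← ofReal_mul, Complex.norm_exp_ofReal_mul_I])
  have hcos : Integrable (fun x => Real.cos (t * x)) ν := by
    simpa [← ofReal_mul, Complex.exp_ofReal_mul_I_re] using hint.re
  rw [charFun_apply_real, ← RCLike.re_to_complex, ← integral_re hint, integral_sub
    (integrable_const 1) hcos, integral_const, probReal_univ, one_smul]
  simp [← ofReal_mul, Complex.exp_ofReal_mul_I_re]

lemma lintegral_one_sub_re_charFun_div_sq (ν : Measure ℝ) [IsProbabilityMeasure ν] :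
    ∫⁻ t, ENNReal.ofReal ((1 - (charFun ν t).re) / (π * t ^ 2)) = ∫⁻ x, ENNReal.ofReal |x| ∂ν := by
  have hkernel : ∀ t, ENNReal.ofReal ((1 - (charFun ν t).re) / (π * t ^ 2))
      = ∫⁻ x, ENNReal.ofReal ((1 - Real.cos (t * x)) / (π * t ^ 2)) ∂ν := fun t => by
    have hint : Integrable (fun x => (1 - Real.cos (t * x)) / (π * t ^ 2)) ν :=
      (integrable_const (2 / (π * t ^ 2))).mono' (by fun_prop) (ae_of_all _ fun x => by
        rw [norm_div, Real.norm_eq_abs, abs_of_nonneg (sub_nonneg.2 (cos_le_one _)),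
          Real.norm_of_nonneg (by positivity)]
        gcongr
        linarith [neg_one_le_cos (t * x)])
    rw [← ofReal_integral_eq_lintegral_ofReal hint
      (ae_of_all _ fun x => div_nonneg (sub_nonneg.2 (cos_le_one _)) (by positivity)),
      integral_div, one_sub_re_charFun]
  simp_rw [hkernel]
  rw [lintegral_lintegral_swap (by fun_prop)]
  simp_rw [lintegral_one_sub_cos_mul_div_sq]

section FirstAbsoluteMoment

variable {ν : Measure ℝ} [IsProbabilityMeasure ν]

lemma one_sub_re_charFun_div_sq_nonneg (t : ℝ) : 0 ≤ (1 - (charFun ν t).re) / (π * t ^ 2) :=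
  div_nonneg (sub_nonneg.2 ((re_le_norm _).trans (norm_charFun_le_one t))) (by positivity)

lemma measurable_one_sub_re_charFun_div_sq :
    Measurable fun t => (1 - (charFun ν t).re) / (π * t ^ 2) := by
  fun_prop

lemma integrable_one_sub_re_charFun_div_sq (h : Integrable id ν) :
    Integrable fun t => (1 - (charFun ν t).re) / (π * t ^ 2) := by
  refine (lintegral_ofReal_ne_top_iff_integrable
    measurable_one_sub_re_charFun_div_sq.aestronglyMeasurable
    (ae_of_all _ one_sub_re_charFun_div_sq_nonneg)).1 ?_
  rw [lintegral_one_sub_re_charFun_div_sq]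
  exact h.abs.lintegral_lt_top.ne

lemma integral_one_sub_re_charFun_div_sq :
    ∫ t, (1 - (charFun ν t).re) / (π * t ^ 2) = ∫ x, |x| ∂ν := by
  rw [integral_eq_lintegral_of_nonneg_ae (ae_of_all _ one_sub_re_charFun_div_sq_nonneg)
      measurable_one_sub_re_charFun_div_sq.aestronglyMeasurable,
    integral_eq_lintegral_of_nonneg_ae (ae_of_all _ fun x => abs_nonneg x) (by fun_prop),
    lintegral_one_sub_re_charFun_div_sq]

end FirstAbsoluteMoment

section RandomVariables

variable {Ω : Type*} [MeasurableSpace Ω] {μ : Measure Ω}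

lemma charFun_map_eq_integral {X : Ω → ℝ} (hX : AEMeasurable X μ) (t : ℝ) :
    charFun (μ.map X) t = ∫ ω, cexp (I * (t * X ω)) ∂μ := by
  rw [charFun_apply_real, integral_map hX (by fun_prop)]
  simp_rw [mul_comm I]

variable [IsProbabilityMeasure μ]

lemma ProbabilityTheory.IndepFun.charFun_map_sub_eq_mul_conj {U V : Ω → ℝ} (hU : AEMeasurable U μ)
    (hV : AEMeasurable V μ) (h : IndepFun U V μ) (t : ℝ) :
    charFun (μ.map fun ω => U ω - V ω) t = charFun (μ.map U) t * conj (charFun (μ.map V) t) := by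
  have hneg : IndepFun U (fun ω => -1 * V ω) μ := h.comp measurable_id (measurable_const_mul _)
  simp_rw [sub_eq_add_neg, neg_eq_neg_one_mul (V _)]
  rw [hneg.charFun_map_fun_add_eq_mul hU (by fun_prop), Pi.mul_apply,
    charFun_map_mul_comp hV, neg_one_mul, charFun_neg]

lemma integral_abs_eq_integral_one_sub_re_charFun_map {W : Ω → ℝ} (hW : AEMeasurable W μ) :
    ∫ ω, |W ω| ∂μ = ∫ t, (1 - (charFun (μ.map W) t).re) / (π * t ^ 2) := by
  have := Measure.isProbabilityMeasure_map hW
  rw [integral_one_sub_re_charFun_div_sq, integral_map hW (by fun_prop)]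

lemma integrable_one_sub_re_charFun_map_div_sq {W : Ω → ℝ} (hW : Integrable W μ) :
    Integrable fun t => (1 - (charFun (μ.map W) t).re) / (π * t ^ 2) := by
  have := Measure.isProbabilityMeasure_map hW.aemeasurable
  exact integrable_one_sub_re_charFun_div_sq
    ((integrable_map_measure aestronglyMeasurable_id hW.aemeasurable).2 hW)

lemma ProbabilityTheory.IndepFun.integral_abs_sub_eq {U V : Ω → ℝ} (hU : AEMeasurable U μ)
    (hV : AEMeasurable V μ) (h : IndepFun U V μ) :
    ∫ ω, |U ω - V ω| ∂μ
      = ∫ t, (1 - (charFun (μ.map U) t * conj (charFun (μ.map V) t)).re) / (π * t ^ 2) := by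
  simp_rw [← h.charFun_map_sub_eq_mul_conj hU hV]
  exact integral_abs_eq_integral_one_sub_re_charFun_map (W := fun ω => U ω - V ω) (by fun_prop)

lemma ProbabilityTheory.IndepFun.integrable_one_sub_re_mul_conj_charFun_div_sq {U V : Ω → ℝ}
    (hU : Integrable U μ) (hV : Integrable V μ) (h : IndepFun U V μ) :
    Integrable fun t =>
      (1 - (charFun (μ.map U) t * conj (charFun (μ.map V) t)).re) / (π * t ^ 2) := by
  simp_rw [← h.charFun_map_sub_eq_mul_conj hU.aemeasurable hV.aemeasurable]
  exact integrable_one_sub_re_charFun_map_div_sq (W := fun ω => U ω - V ω) (hU.sub hV)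

end RandomVariables

theorem energy_distance_eq_charFun_integral
    {Ω : Type*} [MeasurableSpace Ω] {μ : Measure Ω} [IsProbabilityMeasure μ]
    (X X' Y Y' : Ω → ℝ)
    (hX : Measurable X) (hX' : Measurable X') (hY : Measurable Y) (hY' : Measurable Y')
    (hindep : iIndepFun ![X, X', Y, Y'] μ)
    (hXX' : μ.map X = μ.map X') (hYY' : μ.map Y = μ.map Y')
    (hXint : Integrable X μ) (hYint : Integrable Y μ)
    (φX φY : ℝ → ℂ)
    (hφX : ∀ t, φX t = ∫ ω, Complex.exp (Complex.I * (t * X ω)) ∂μ)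
    (hφY : ∀ t, φY t = ∫ ω, Complex.exp (Complex.I * (t * Y ω)) ∂μ) :
    2 * (∫ ω, |X ω - Y ω| ∂μ) - (∫ ω, |X ω - X' ω| ∂μ) - (∫ ω, |Y ω - Y' ω| ∂μ)
      = ∫ t : ℝ, ‖φX t - φY t‖ ^ 2 / (π * t ^ 2) := by
  have hX'int : Integrable X' μ :=
    (IdentDistrib.mk hX.aemeasurable hX'.aemeasurable hXX').integrable_iff.1 hXint
  have hY'int : Integrable Y' μ :=
    (IdentDistrib.mk hY.aemeasurable hY'.aemeasurable hYY').integrable_iff.1 hYint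
  have hXY : IndepFun X Y μ := by simpa using hindep.indepFun (i := 0) (j := 2) (by decide)
  have hXX'i : IndepFun X X' μ := by simpa using hindep.indepFun (i := 0) (j := 1) (by decide)
  have hYY'i : IndepFun Y Y' μ := by simpa using hindep.indepFun (i := 2) (j := 3) (by decide)
  obtain rfl : φX = charFun (μ.map X) :=
    funext fun t => by rw [hφX, charFun_map_eq_integral hX.aemeasurable]
  obtain rfl : φY = charFun (μ.map Y) :=
    funext fun t => by rw [hφY, charFun_map_eq_integral hY.aemeasurable]
  have hsq_norm_sub : ∀ (a b : ℂ) (d : ℝ), ‖a - b‖ ^ 2 / d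
      = 2 * ((1 - (a * conj b).re) / d) - (1 - (a * conj a).re) / d - (1 - (b * conj b).re) / d :=
    fun a b d => by
      rw [Complex.sq_norm, Complex.normSq_sub, Complex.mul_conj, Complex.mul_conj, ofReal_re,
        ofReal_re]
      ring
  have iXY := hXY.integrable_one_sub_re_mul_conj_charFun_div_sq hXint hYint
  have iXX := hXX'i.integrable_one_sub_re_mul_conj_charFun_div_sq hXint hX'int
  have iYY := hYY'i.integrable_one_sub_re_mul_conj_charFun_div_sq hYint hY'int
  rw [← hXX'] at iXX
  rw [← hYY'] at iYY
  simp_rw [hsq_norm_sub]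
  rw [integral_sub (by exact (iXY.const_mul 2).sub iXX) iYY, integral_sub (iXY.const_mul 2) iXX,
    integral_const_mul, hXY.integral_abs_sub_eq hX.aemeasurable hY.aemeasurable,
    hXX'i.integral_abs_sub_eq hX.aemeasurable hX'.aemeasurable, ← hXX',
    hYY'i.integral_abs_sub_eq hY.aemeasurable hY'.aemeasurable, ← hYY']
end
end

section
/- For independent real-valued random variables X and Y with E|X|^α + E|Y|^α < ∞ for some α ∈ (0,2), the generalized energy distance ℰ(X,Y;α) = 2E|X−Y|^α − E|X−X'|^α − E|Y−Y'|^α is finite and nonnegative. -/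
open MeasureTheory ProbabilityTheory Real Set
open scoped ENNReal

noncomputable section

/-!
For `0 < α < 2` one has `|x| ^ α = c⁻¹ ∫₀^∞ (1 - cos (t x)) t^(-1-α) dt` with `0 < c < ∞`
(substitute `s = |x| t`). By Tonelli, `E|U - V| ^ α` is then a weighted `t`-integral of
`E[1 - cos (t (U - V))]`, which for independent `U, V` equals `1 - Re (φ_U(t) conj φ_V(t))`.
Hence the energy distance is `c⁻¹ ∫₀^∞ |φ_X(t) - φ_Y(t)|² t^(-1-α) dt ≥ 0`. Finiteness holds
because `Lᵅ` is closed under subtraction, also for `α < 1`.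
-/

lemma lintegral_Ioi_comp_mul_left {c : ℝ} (hc : 0 < c) {f : ℝ → ℝ≥0∞} (hf : Measurable f) :
    ∫⁻ t in Ioi 0, f (c * t) = ENNReal.ofReal c⁻¹ * ∫⁻ t in Ioi 0, f t := by
  have hpre : (c * ·) ⁻¹' Ioi 0 = Ioi 0 := by
    ext t
    simp [mul_pos_iff_of_pos_left hc]
  have hmap : (volume.restrict (Ioi 0)).map (c * ·) =
      ENNReal.ofReal c⁻¹ • volume.restrict (Ioi 0) := by
    conv_lhs => rw [← hpre]
    rw [← Measure.restrict_map (measurable_const_mul c) measurableSet_Ioi,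
      Real.map_volume_mul_left hc.ne', Measure.restrict_smul, abs_of_pos (inv_pos.mpr hc)]
  rw [← lintegral_map hf (measurable_const_mul c), hmap, lintegral_smul_measure, smul_eq_mul]

def oneSubCosIntegral (α x : ℝ) : ℝ≥0∞ :=
  ∫⁻ t in Ioi 0, ENNReal.ofReal ((1 - cos (t * x)) * t ^ (-1 - α))

lemma oneSubCosIntegral_eq_rpow_abs_mul {α : ℝ} (hα : 0 < α) (x : ℝ) :
    oneSubCosIntegral α x = ENNReal.ofReal (|x| ^ α) * oneSubCosIntegral α 1 := by
  rcases eq_or_ne x 0 with rfl | hx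
  · simp [oneSubCosIntegral, zero_rpow hα.ne']
  have hc : 0 < |x| := abs_pos.mpr hx
  set g : ℝ → ℝ≥0∞ := fun s => ENNReal.ofReal ((1 - cos s) * s ^ (-1 - α))
  -- `(1 - cos (t x)) t^(-1-α) = |x|^(1+α) g (|x| t)`, and substituting `s = |x| t` costs `|x|⁻¹`
  have hrescale : ∀ t ∈ Ioi (0 : ℝ), ENNReal.ofReal ((1 - cos (t * x)) * t ^ (-1 - α)) =
      ENNReal.ofReal (|x| ^ (1 + α)) * g (|x| * t) := by
    intro t ht
    rw [← ENNReal.ofReal_mul (by positivity), mul_rpow hc.le (le_of_lt ht),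
      show -1 - α = -(1 + α) by ring, rpow_neg hc.le, ← cos_abs (t * x), abs_mul, abs_of_pos ht]
    field_simp
  have hscale :
      ENNReal.ofReal (|x| ^ (1 + α)) * ENNReal.ofReal |x|⁻¹ = ENNReal.ofReal (|x| ^ α) := by
    rw [← ENNReal.ofReal_mul (by positivity), ← rpow_neg_one, ← rpow_add hc]
    ring_nf
  rw [oneSubCosIntegral, setLIntegral_congr_fun measurableSet_Ioi hrescale,
    lintegral_const_mul' _ _ ENNReal.ofReal_ne_top,
    lintegral_Ioi_comp_mul_left hc (by unfold g; fun_prop), ← mul_assoc, hscale]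
  simp [oneSubCosIntegral, g]

lemma oneSubCosIntegral_one_pos (α : ℝ) : 0 < oneSubCosIntegral α 1 := by
  rw [oneSubCosIntegral, setLIntegral_pos_iff (by fun_prop)]
  refine lt_of_lt_of_le (by simp) (measure_mono (s := Ioo (0 : ℝ) 1) fun t ht => ⟨?_, ht.1⟩)
  have hcos : cos t < 1 := by
    simpa using cos_lt_cos_of_nonneg_of_le_pi le_rfl (by linarith [ht.2, pi_gt_three]) ht.1
  simp only [Function.mem_support, mul_one, ne_eq, ENNReal.ofReal_eq_zero, not_le]
  exact mul_pos (by linarith) (rpow_pos_of_pos ht.1 _)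

lemma oneSubCosIntegral_one_lt_top {α : ℝ} (hα : α ∈ Ioo 0 2) : oneSubCosIntegral α 1 < ∞ := by
  obtain ⟨hα0, hα2⟩ := hα
  rw [oneSubCosIntegral, ← Ioc_union_Ioi_eq_Ioi zero_le_one,
    lintegral_union measurableSet_Ioi (Ioc_disjoint_Ioi le_rfl)]
  refine ENNReal.add_lt_top.mpr ⟨?_, ?_⟩
  -- near `0`, `1 - cos t ≤ t ^ 2 / 2` makes the integrand `O(t^(1-α))`
  · have hint : IntegrableOn (fun t : ℝ => 2⁻¹ * t ^ (1 - α)) (Ioc 0 1) :=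
      (((intervalIntegral.integrableOn_Ioo_rpow_iff zero_lt_one).mpr (by linarith)).congr_set_ae
        Ioo_ae_eq_Ioc.symm).const_mul _
    refine lt_of_le_of_lt (setLIntegral_mono (by fun_prop) fun t ht => ?_) hint.lintegral_lt_top
    refine ENNReal.ofReal_le_ofReal ?_
    have hcos : 1 - cos (t * 1) ≤ t ^ 2 / 2 := by
      linarith [one_sub_sq_div_two_le_cos (x := t * 1), mul_one t]
    calc (1 - cos (t * 1)) * t ^ (-1 - α) ≤ t ^ 2 / 2 * t ^ (-1 - α) :=
          mul_le_mul_of_nonneg_right hcos (rpow_nonneg ht.1.le _)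
      _ = 2⁻¹ * t ^ (1 - α) := by
          rw [← rpow_natCast, div_mul_eq_mul_div, ← rpow_add ht.1]
          ring_nf
  -- near `∞`, `1 - cos t ≤ 2` makes the integrand `O(t^(-1-α))`
  · have hint : IntegrableOn (fun t : ℝ => 2 * t ^ (-1 - α)) (Ioi 1) :=
      ((integrableOn_Ioi_rpow_iff zero_lt_one).mpr (by linarith)).const_mul 2
    refine lt_of_le_of_lt (setLIntegral_mono (by fun_prop) fun t ht => ?_) hint.lintegral_lt_top
    refine ENNReal.ofReal_le_ofReal (mul_le_mul_of_nonneg_right ?_ (rpow_nonneg ?_ _))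
    · linarith [neg_one_le_cos (t * 1)]
    · linarith [mem_Ioi.mp ht]

section Probability

variable {Ω : Type*} [MeasurableSpace Ω] {μ : Measure Ω}

lemma lintegral_rpow_abs_mul_oneSubCosIntegral [IsFiniteMeasure μ] {α : ℝ} (hα : 0 < α)
    {Z : Ω → ℝ} (hZ : Measurable Z) :
    (∫⁻ ω, ENNReal.ofReal (|Z ω| ^ α) ∂μ) * oneSubCosIntegral α 1 =
      ∫⁻ t in Ioi 0, ENNReal.ofReal ((∫ ω, (1 - cos (t * Z ω)) ∂μ) * t ^ (-1 - α)) := by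
  calc (∫⁻ ω, ENNReal.ofReal (|Z ω| ^ α) ∂μ) * oneSubCosIntegral α 1
      = ∫⁻ ω, oneSubCosIntegral α (Z ω) ∂μ := by
        rw [← lintegral_mul_const _ (by fun_prop)]
        exact lintegral_congr fun ω => (oneSubCosIntegral_eq_rpow_abs_mul hα _).symm
    _ = ∫⁻ t in Ioi 0, ∫⁻ ω, ENNReal.ofReal ((1 - cos (t * Z ω)) * t ^ (-1 - α)) ∂μ :=
        lintegral_lintegral_swap (by fun_prop)
    _ = _ := by
        refine setLIntegral_congr_fun measurableSet_Ioi fun t ht => ?_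
        rw [← integral_mul_const, ofReal_integral_eq_lintegral_ofReal]
        · exact ((integrable_const 1).sub (Integrable.of_bound (by fun_prop) 1
            (ae_of_all _ fun ω => abs_cos_le_one _))).mul_const _
        · exact ae_of_all _ fun ω =>
            mul_nonneg (sub_nonneg.2 (cos_le_one _)) (rpow_nonneg (le_of_lt ht) _)

lemma integral_one_sub_cos_mul_sub_of_indepFun [IsProbabilityMeasure μ] (t : ℝ) {U V : Ω → ℝ}
    (hU : Measurable U) (hV : Measurable V) (hUV : IndepFun U V μ) :
    ∫ ω, (1 - cos (t * (U ω - V ω))) ∂μ =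
      1 - ((∫ ω, cos (t * U ω) ∂μ) * (∫ ω, cos (t * V ω) ∂μ)
        + (∫ ω, sin (t * U ω) ∂μ) * (∫ ω, sin (t * V ω) ∂μ)) := by
  have hbdd {f g : ℝ → ℝ} (hf : Continuous f) (hg : Continuous g) (hf1 : ∀ x, |f x| ≤ 1)
      (hg1 : ∀ x, |g x| ≤ 1) : Integrable (fun ω => f (t * U ω) * g (t * V ω)) μ :=
    Integrable.of_bound (by fun_prop) 1 (ae_of_all _ fun ω => by
      rw [norm_mul]; exact mul_le_one₀ (hf1 _) (norm_nonneg _) (hg1 _))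
  have hcc := hbdd continuous_cos continuous_cos abs_cos_le_one abs_cos_le_one
  have hss := hbdd continuous_sin continuous_sin abs_sin_le_one abs_sin_le_one
  calc ∫ ω, (1 - cos (t * (U ω - V ω))) ∂μ
      = ∫ ω, (1 : ℝ) ∂μ -
          ∫ ω, (cos (t * U ω) * cos (t * V ω) + sin (t * U ω) * sin (t * V ω)) ∂μ := by
        simp_rw [mul_sub, cos_sub]
        exact integral_sub (integrable_const 1) (hcc.add hss)
    _ = _ := by
        rw [integral_add hcc hss,
          hUV.integral_fun_comp_mul_comp (f := fun x => cos (t * x)) (g := fun x => cos (t * x))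
            hU.aemeasurable hV.aemeasurable (by fun_prop) (by fun_prop),
          hUV.integral_fun_comp_mul_comp (f := fun x => sin (t * x)) (g := fun x => sin (t * x))
            hU.aemeasurable hV.aemeasurable (by fun_prop) (by fun_prop)]
        simp

lemma integral_one_sub_cos_energy_le [IsProbabilityMeasure μ] (t : ℝ) {X X' Y Y' : Ω → ℝ}
    (hX : Measurable X) (hX' : Measurable X') (hY : Measurable Y) (hY' : Measurable Y')
    (hXY : IndepFun X Y μ) (hXX' : IndepFun X X' μ) (hYY' : IndepFun Y Y' μ)
    (hX'X : IdentDistrib X' X μ μ) (hY'Y : IdentDistrib Y' Y μ μ) :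
    ∫ ω, (1 - cos (t * (X ω - X' ω))) ∂μ + ∫ ω, (1 - cos (t * (Y ω - Y' ω))) ∂μ ≤
      2 * ∫ ω, (1 - cos (t * (X ω - Y ω))) ∂μ := by
  have hlaw {W W' : Ω → ℝ} (h : IdentDistrib W' W μ μ) (f : ℝ → ℝ) (hf : Continuous f) :
      ∫ ω, f (t * W' ω) ∂μ = ∫ ω, f (t * W ω) ∂μ :=
    (h.comp (u := fun x => f (t * x)) (by fun_prop)).integral_eq
  rw [integral_one_sub_cos_mul_sub_of_indepFun t hX hY hXY,
    integral_one_sub_cos_mul_sub_of_indepFun t hX hX' hXX',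
    integral_one_sub_cos_mul_sub_of_indepFun t hY hY' hYY',
    hlaw hX'X cos continuous_cos, hlaw hX'X sin continuous_sin,
    hlaw hY'Y cos continuous_cos, hlaw hY'Y sin continuous_sin]
  -- the gap is `|φ_X(t) - φ_Y(t)|²`, written through real and imaginary parts
  nlinarith [sq_nonneg ((∫ ω, cos (t * X ω) ∂μ) - ∫ ω, cos (t * Y ω) ∂μ),
    sq_nonneg ((∫ ω, sin (t * X ω) ∂μ) - ∫ ω, sin (t * Y ω) ∂μ)]

lemma integrable_rpow_abs_iff_memLp {α : ℝ} (hα : 0 < α) {f : Ω → ℝ}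
    (hf : AEStronglyMeasurable f μ) :
    Integrable (fun ω => |f ω| ^ α) μ ↔ MemLp f (ENNReal.ofReal α) μ := by
  simpa [ENNReal.toReal_ofReal hα.le] using
    integrable_norm_rpow_iff hf (ENNReal.ofReal_pos.2 hα).ne' ENNReal.ofReal_ne_top

lemma integrable_rpow_abs_sub {α : ℝ} (hα : 0 < α) {f g : Ω → ℝ}
    (hf : AEStronglyMeasurable f μ) (hg : AEStronglyMeasurable g μ)
    (hfα : Integrable (fun ω => |f ω| ^ α) μ) (hgα : Integrable (fun ω => |g ω| ^ α) μ) :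
    Integrable (fun ω => |f ω - g ω| ^ α) μ :=
  (integrable_rpow_abs_iff_memLp hα (hf.sub hg)).2
    (((integrable_rpow_abs_iff_memLp hα hf).1 hfα).sub
      ((integrable_rpow_abs_iff_memLp hα hg).1 hgα))

theorem integral_rpow_abs_sub_energy_le [IsProbabilityMeasure μ] {α : ℝ} (hα : α ∈ Ioo 0 2)
    {X X' Y Y' : Ω → ℝ}
    (hX : Measurable X) (hX' : Measurable X') (hY : Measurable Y) (hY' : Measurable Y')
    (hXY : IndepFun X Y μ) (hXX' : IndepFun X X' μ) (hYY' : IndepFun Y Y' μ)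
    (hX'X : IdentDistrib X' X μ μ) (hY'Y : IdentDistrib Y' Y μ μ)
    (hXYα : Integrable (fun ω => |X ω - Y ω| ^ α) μ)
    (hXX'α : Integrable (fun ω => |X ω - X' ω| ^ α) μ)
    (hYY'α : Integrable (fun ω => |Y ω - Y' ω| ^ α) μ) :
    ∫ ω, |X ω - X' ω| ^ α ∂μ + ∫ ω, |Y ω - Y' ω| ^ α ∂μ ≤ 2 * ∫ ω, |X ω - Y ω| ^ α ∂μ := by
  have hrepr {U V : Ω → ℝ} (hU : Measurable U) (hV : Measurable V)
      (hUVα : Integrable (fun ω => |U ω - V ω| ^ α) μ) :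
      ENNReal.ofReal (∫ ω, |U ω - V ω| ^ α ∂μ) * oneSubCosIntegral α 1 =
        ∫⁻ t in Ioi 0, ENNReal.ofReal ((∫ ω, (1 - cos (t * (U ω - V ω))) ∂μ) * t ^ (-1 - α)) := by
    rw [ofReal_integral_eq_lintegral_ofReal hUVα (ae_of_all _ fun ω => by positivity)]
    exact lintegral_rpow_abs_mul_oneSubCosIntegral hα.1 (hU.sub hV)
  have hnonneg (t : ℝ) (W : Ω → ℝ) : 0 ≤ ∫ ω, (1 - cos (t * W ω)) ∂μ :=
    integral_nonneg fun ω => sub_nonneg.2 (cos_le_one _)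
  have hweighted :
      ENNReal.ofReal (∫ ω, |X ω - X' ω| ^ α ∂μ + ∫ ω, |Y ω - Y' ω| ^ α ∂μ) *
        oneSubCosIntegral α 1 ≤
      ENNReal.ofReal (2 * ∫ ω, |X ω - Y ω| ^ α ∂μ) * oneSubCosIntegral α 1 := by
    rw [ENNReal.ofReal_add (integral_nonneg fun ω => by positivity)
        (integral_nonneg fun ω => by positivity), add_mul, ENNReal.ofReal_mul zero_le_two,
      mul_assoc, hrepr hX hX' hXX'α, hrepr hY hY' hYY'α, hrepr hX hY hXYα,
      ← lintegral_const_mul' _ _ ENNReal.ofReal_ne_top]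
    refine (le_lintegral_add _ _).trans (setLIntegral_mono' measurableSet_Ioi fun t ht => ?_)
    have hw : 0 ≤ t ^ (-1 - α) := rpow_nonneg (le_of_lt ht) _
    rw [← ENNReal.ofReal_add (mul_nonneg (hnonneg _ _) hw) (mul_nonneg (hnonneg _ _) hw),
      ← ENNReal.ofReal_mul zero_le_two, ← add_mul, ← mul_assoc]
    exact ENNReal.ofReal_le_ofReal (mul_le_mul_of_nonneg_right
      (integral_one_sub_cos_energy_le t hX hX' hY hY' hXY hXX' hYY' hX'X hY'Y) hw)
  rw [ENNReal.mul_le_mul_iff_left (oneSubCosIntegral_one_pos α).ne'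
    (oneSubCosIntegral_one_lt_top hα).ne] at hweighted
  exact (ENNReal.ofReal_le_ofReal_iff (mul_nonneg zero_le_two
    (integral_nonneg fun ω => by positivity))).1 hweighted

end Probability

theorem generalized_energy_distance_finite_nonneg
    {Ω : Type*} [MeasurableSpace Ω] {μ : Measure Ω} [IsProbabilityMeasure μ]
    (α : ℝ) (hα : α ∈ Set.Ioo (0 : ℝ) 2)
    (X X' Y Y' : Ω → ℝ)
    (hX : Measurable X) (hX' : Measurable X') (hY : Measurable Y) (hY' : Measurable Y')
    (hindep : iIndepFun ![X, X', Y, Y'] μ)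
    (hXX' : μ.map X = μ.map X') (hYY' : μ.map Y = μ.map Y')
    (hXmom : Integrable (fun ω => |X ω| ^ α) μ) (hYmom : Integrable (fun ω => |Y ω| ^ α) μ) :
    (Integrable (fun ω => |X ω - Y ω| ^ α) μ ∧
     Integrable (fun ω => |X ω - X' ω| ^ α) μ ∧
     Integrable (fun ω => |Y ω - Y' ω| ^ α) μ) ∧
    0 ≤ 2 * (∫ ω, |X ω - Y ω| ^ α ∂μ) - (∫ ω, |X ω - X' ω| ^ α ∂μ)
        - ∫ ω, |Y ω - Y' ω| ^ α ∂μ := by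
  have hX'X : IdentDistrib X' X μ μ := ⟨hX'.aemeasurable, hX.aemeasurable, hXX'.symm⟩
  have hY'Y : IdentDistrib Y' Y μ μ := ⟨hY'.aemeasurable, hY.aemeasurable, hYY'.symm⟩
  have hX'mom : Integrable (fun ω => |X' ω| ^ α) μ :=
    (hX'X.comp (u := fun x => |x| ^ α) (by fun_prop)).integrable_iff.2 hXmom
  have hY'mom : Integrable (fun ω => |Y' ω| ^ α) μ :=
    (hY'Y.comp (u := fun x => |x| ^ α) (by fun_prop)).integrable_iff.2 hYmom
  have hXYα := integrable_rpow_abs_sub hα.1 hX.aestronglyMeasurable hY.aestronglyMeasurable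
    hXmom hYmom
  have hXX'α := integrable_rpow_abs_sub hα.1 hX.aestronglyMeasurable hX'.aestronglyMeasurable
    hXmom hX'mom
  have hYY'α := integrable_rpow_abs_sub hα.1 hY.aestronglyMeasurable hY'.aestronglyMeasurable
    hYmom hY'mom
  refine ⟨⟨hXYα, hXX'α, hYY'α⟩, ?_⟩
  have henergy := integral_rpow_abs_sub_energy_le hα hX hX' hY hY'
    (hindep.indepFun (by decide : (0 : Fin 4) ≠ 2))
    (hindep.indepFun (by decide : (0 : Fin 4) ≠ 1))
    (hindep.indepFun (by decide : (2 : Fin 4) ≠ 3)) hX'X hY'Y hXYα hXX'α hYY'α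
  linarith
end
end

section
/- Let X₁,…,Xₙ and Y₁,…,Y_m be as above with E|X|^α, E|Y|^α < ∞, α ∈ (0,2). Then as min(n,m) → ∞, the sample statistic ℰ̂(Xₙ, Y_m; α) converges almost surely to ℰ(X,Y;α). -/
open MeasureTheory ProbabilityTheory Finset Filter
open scoped Topology

noncomputable section

/-!
The three terms of the sample statistic are V- and U-statistics of the kernel `|x - y| ^ α`.
For a product kernel `f x * g y` the two-sample V-statistic is the product of two sample means,
so the strong law of large numbers applies factor by factor, whatever the joint law of the two
samples. A general kernel is reached by approximation: clamping both arguments to `[-M, M]`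
changes `|x - y| ^ α` by at most `2 ^ α * (|x| ^ α 𝟙{|x| > M} + |y| ^ α 𝟙{|y| > M})`, a separable
kernel of small mean, and the clamped kernel is uniformly close to a polynomial in the difference
of the clamped arguments (Weierstrass), which expands into product kernels. Only countably many
sample means are involved, so almost surely they all converge. Independence identifies the limit
`∫ |x - y| ^ α d(P_X ⊗ P_Y)` with `E |X - Y| ^ α`, and the U-statistics are the diagonal
V-statistics times `n / (n - 1)`.
-/

theorem ProbabilityTheory.IndepFun.integral_comp_eq_integral_prod {Ω β γ : Type*}
    [MeasurableSpace Ω] [MeasurableSpace β] [MeasurableSpace γ] {P : Measure Ω} [IsFiniteMeasure P]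
    {U : Ω → β} {V : Ω → γ} (hUV : IndepFun U V P)
    (hU : AEMeasurable U P) (hV : AEMeasurable V P) {g : β × γ → ℝ}
    (hg : AEStronglyMeasurable g ((P.map U).prod (P.map V))) :
    ∫ ω, g (U ω, V ω) ∂P = ∫ z, g z ∂((P.map U).prod (P.map V)) := by
  rw [← hUV.map_prod_eq_prod_map_map hU hV] at hg ⊢
  exact (integral_map (hU.prodMk hV) hg).symm

namespace EnergyStatistic

variable {E F : Type*}

section Statistics

def empiricalMean (f : E → ℝ) (u : ℕ → E) (n : ℕ) : ℝ :=
  (∑ i ∈ range n, f (u i)) / n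

def vstat (K : E → F → ℝ) (u : ℕ → E) (w : ℕ → F) (p : ℕ × ℕ) : ℝ :=
  (∑ i ∈ range p.1, ∑ j ∈ range p.2, K (u i) (w j)) / (p.1 * p.2)

def ustat (K : E → E → ℝ) (u : ℕ → E) (n : ℕ) : ℝ :=
  (n.choose 2 : ℝ)⁻¹ * ∑ i ∈ range n, ∑ j ∈ range n, if i < j then K (u i) (u j) else 0

variable {u : ℕ → E} {w : ℕ → F}

lemma vstat_mul (f : E → ℝ) (g : F → ℝ) (p : ℕ × ℕ) :
    vstat (fun x y => f x * g y) u w p = empiricalMean f u p.1 * empiricalMean g w p.2 := by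
  rw [vstat, empiricalMean, empiricalMean, div_mul_div_comm, sum_mul_sum]

lemma vstat_add (K L : E → F → ℝ) (p : ℕ × ℕ) :
    vstat (fun x y => K x y + L x y) u w p = vstat K u w p + vstat L u w p := by
  simp only [vstat, sum_add_distrib, add_div]

lemma vstat_sum {ι : Type*} (s : Finset ι) (K : ι → E → F → ℝ) (p : ℕ × ℕ) :
    vstat (fun x y => ∑ k ∈ s, K k x y) u w p = ∑ k ∈ s, vstat (K k) u w p := by
  simp only [vstat, ← sum_div]
  congr 1
  rw [sum_comm (s := s)]
  exact sum_congr rfl fun _ _ => sum_comm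

lemma abs_vstat_sub_le {K L B : E → F → ℝ} (h : ∀ x y, |K x y - L x y| ≤ B x y) (p : ℕ × ℕ) :
    |vstat K u w p - vstat L u w p| ≤ vstat B u w p := by
  simp only [vstat, ← sub_div, ← sum_sub_distrib, abs_div]
  rw [abs_of_nonneg (by positivity : (0 : ℝ) ≤ p.1 * p.2)]
  gcongr
  exact (abs_sum_le_sum_abs _ _).trans
    (sum_le_sum fun i _ => (abs_sum_le_sum_abs _ _).trans (sum_le_sum fun j _ => h _ _))

lemma sum_sum_eq_two_mul_sum_sum_ite_lt (K : ℕ → ℕ → ℝ) (hsymm : ∀ i j, K i j = K j i)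
    (hdiag : ∀ i, K i i = 0) (n : ℕ) :
    ∑ i ∈ range n, ∑ j ∈ range n, K i j
      = 2 * ∑ i ∈ range n, ∑ j ∈ range n, if i < j then K i j else 0 := by
  have hsplit : ∀ i j, K i j = (if i < j then K i j else 0) + if j < i then K j i else 0 := by
    intro i j
    rcases lt_trichotomy i j with h | rfl | h
    · simp [h, h.not_gt]
    · simp [hdiag]
    · simp [h, h.not_gt, hsymm i j]
  rw [sum_congr rfl fun i _ => sum_congr rfl fun j _ => hsplit i j]
  simp only [sum_add_distrib]
  rw [sum_comm (f := fun i j => if j < i then K j i else 0)]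
  ring

lemma tendsto_ustat_of_tendsto_vstat {K : E → E → ℝ} (hsymm : ∀ x y, K x y = K y x)
    (hdiag : ∀ x, K x x = 0) {u : ℕ → E} {L : ℝ} (h : Tendsto (vstat K u u) atTop (𝓝 L)) :
    Tendsto (ustat K u) atTop (𝓝 L) := by
  have hfactor : Tendsto (fun n : ℕ => (1 - 1 / (n : ℝ))⁻¹) atTop (𝓝 1) := by
    simpa using (tendsto_const_nhds.sub tendsto_one_div_atTop_nhds_zero_nat).inv₀
      (by norm_num : (1 : ℝ) - 0 ≠ 0)
  refine ((h.comp tendsto_atTop_diagonal).mul hfactor).congr' ?_ |>.trans (by rw [mul_one])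
  filter_upwards [eventually_ge_atTop 2] with n hn
  have hn' : (2 : ℝ) ≤ n := by exact_mod_cast hn
  simp only [Function.comp_apply, vstat, ustat, Nat.cast_choose_two,
    sum_sum_eq_two_mul_sum_sum_ite_lt (fun i j => K (u i) (u j)) (fun i j => hsymm _ _)
      (fun i => hdiag _)]
  field_simp

end Statistics

section Convergence

variable [MeasurableSpace E] [MeasurableSpace F]

-- Integrability is part of both notions so that they are closed under sums.
def SampleMeanTendsto (μ : Measure E) (u : ℕ → E) (f : E → ℝ) : Prop :=
  Integrable f μ ∧ Tendsto (empiricalMean f u) atTop (𝓝 (∫ x, f x ∂μ))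

def VStatTendsto (μ : Measure E) (ν : Measure F) (u : ℕ → E) (w : ℕ → F)
    (K : E → F → ℝ) : Prop :=
  Integrable (fun z : E × F => K z.1 z.2) (μ.prod ν) ∧
    Tendsto (vstat K u w) atTop (𝓝 (∫ z, K z.1 z.2 ∂(μ.prod ν)))

variable {μ : Measure E} {ν : Measure F} {u : ℕ → E} {w : ℕ → F} {f : E → ℝ}

lemma SampleMeanTendsto.const [IsProbabilityMeasure μ] (c : ℝ) :
    SampleMeanTendsto μ u (fun _ => c) := by
  refine ⟨integrable_const c, tendsto_const_nhds.congr' ?_⟩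
  filter_upwards [eventually_ne_atTop 0] with n hn
  simp [empiricalMean, hn]

lemma SampleMeanTendsto.const_mul (hf : SampleMeanTendsto μ u f) (c : ℝ) :
    SampleMeanTendsto μ u (fun x => c * f x) := by
  refine ⟨hf.1.const_mul c, ?_⟩
  rw [integral_const_mul]
  exact (hf.2.const_mul c).congr fun n => by
    simp only [empiricalMean, ← mul_sum, mul_div_assoc]

lemma SampleMeanTendsto.add {g : E → ℝ} (hf : SampleMeanTendsto μ u f)
    (hg : SampleMeanTendsto μ u g) :
    SampleMeanTendsto μ u (fun x => f x + g x) := by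
  refine ⟨hf.1.add hg.1, ?_⟩
  rw [integral_add hf.1 hg.1]
  exact (hf.2.add hg.2).congr fun n => by
    simp only [empiricalMean, sum_add_distrib, add_div]

variable {K L : E → F → ℝ}

lemma VStatTendsto.mul [SFinite μ] [SFinite ν] {g : F → ℝ} (hf : SampleMeanTendsto μ u f)
    (hg : SampleMeanTendsto ν w g) : VStatTendsto μ ν u w (fun x y => f x * g y) := by
  refine ⟨hf.1.mul_prod hg.1, ?_⟩
  rw [integral_prod_mul, ← prod_atTop_atTop_eq]
  exact ((hf.2.comp tendsto_fst).mul (hg.2.comp tendsto_snd)).congr fun p =>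
    (vstat_mul f g p).symm

lemma VStatTendsto.add (hK : VStatTendsto μ ν u w K) (hL : VStatTendsto μ ν u w L) :
    VStatTendsto μ ν u w (fun x y => K x y + L x y) := by
  refine ⟨hK.1.add hL.1, ?_⟩
  rw [integral_add hK.1 hL.1]
  exact (hK.2.add hL.2).congr fun p => (vstat_add K L p).symm

lemma integral_prod_add [IsProbabilityMeasure μ] [IsProbabilityMeasure ν] {g : F → ℝ}
    (hf : Integrable f μ) (hg : Integrable g ν) :
    ∫ z, f z.1 + g z.2 ∂(μ.prod ν) = ∫ x, f x ∂μ + ∫ y, g y ∂ν := by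
  rw [integral_add (hf.comp_fst ν) (hg.comp_snd μ), integral_fun_fst, integral_fun_snd]
  simp only [probReal_univ, one_smul]

lemma VStatTendsto.add_sep [IsProbabilityMeasure μ] [IsProbabilityMeasure ν] {g : F → ℝ}
    (hf : SampleMeanTendsto μ u f) (hg : SampleMeanTendsto ν w g) :
    VStatTendsto μ ν u w (fun x y => f x + g y) := by
  simpa only [mul_one, one_mul] using (VStatTendsto.mul hf (.const 1)).add (.mul (.const 1) hg)

lemma VStatTendsto.sum {ι : Type*} (s : Finset ι) {K : ι → E → F → ℝ}
    (hK : ∀ k ∈ s, VStatTendsto μ ν u w (K k)) :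
    VStatTendsto μ ν u w (fun x y => ∑ k ∈ s, K k x y) := by
  refine ⟨integrable_finsetSum s fun k hk => (hK k hk).1, ?_⟩
  rw [integral_finsetSum s fun k hk => (hK k hk).1]
  exact (tendsto_finsetSum s fun k hk => (hK k hk).2).congr fun p => (vstat_sum s K p).symm

lemma VStatTendsto.eval_sub [SFinite μ] [SFinite ν] (q : Polynomial ℝ) {φ : E → ℝ} {ψ : F → ℝ}
    (hφ : ∀ k : ℕ, SampleMeanTendsto μ u (fun x => φ x ^ k))
    (hψ : ∀ k : ℕ, SampleMeanTendsto ν w (fun y => ψ y ^ k)) :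
    VStatTendsto μ ν u w (fun x y => q.eval (φ x - ψ y)) := by
  have hexpand : ∀ x y, q.eval (φ x - ψ y) = ∑ i ∈ range (q.natDegree + 1), ∑ m ∈ range (i + 1),
      (q.coeff i * i.choose m * φ x ^ m) * ((-1) ^ (i - m) * ψ y ^ (i - m)) := by
    intro x y
    rw [Polynomial.eval_eq_sum_range, sub_eq_add_neg]
    refine sum_congr rfl fun i _ => ?_
    rw [add_pow, mul_sum]
    refine sum_congr rfl fun m _ => ?_
    rw [neg_pow]
    ring
  simp only [hexpand]
  exact .sum _ fun i _ => .sum _ fun m _ => .mul ((hφ m).const_mul _) ((hψ _).const_mul _)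

lemma VStatTendsto.of_forall_approx
    (hK : AEStronglyMeasurable (fun z : E × F => K z.1 z.2) (μ.prod ν))
    (h : ∀ ε > 0, ∃ L B : E → F → ℝ, VStatTendsto μ ν u w L ∧ VStatTendsto μ ν u w B ∧
      (∀ x y, |K x y - L x y| ≤ B x y) ∧ ∫ z, B z.1 z.2 ∂(μ.prod ν) < ε) :
    VStatTendsto μ ν u w K := by
  have hKi : Integrable (fun z : E × F => K z.1 z.2) (μ.prod ν) := by
    obtain ⟨L, B, hL, hB, hKL, -⟩ := h 1 one_pos
    refine (hL.1.norm.add hB.1).mono' hK (Eventually.of_forall fun z => ?_)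
    have := abs_sub_abs_le_abs_sub (K z.1 z.2) (L z.1 z.2)
    have := hKL z.1 z.2
    simp only [Pi.add_apply, Real.norm_eq_abs]
    linarith
  refine ⟨hKi, Metric.tendsto_nhds.2 fun ε hε => ?_⟩
  obtain ⟨L, B, hL, hB, hKL, hBε⟩ := h (ε / 3) (by positivity)
  have hint : |∫ z, K z.1 z.2 ∂(μ.prod ν) - ∫ z, L z.1 z.2 ∂(μ.prod ν)|
      ≤ ∫ z, B z.1 z.2 ∂(μ.prod ν) := by
    rw [← integral_sub hKi hL.1]
    exact abs_integral_le_integral_abs.trans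
      (integral_mono (hKi.sub hL.1).abs hB.1 fun z => hKL z.1 z.2)
  filter_upwards [(tendsto_order.1 hB.2).2 _ hBε,
    Metric.tendsto_nhds.1 hL.2 (ε / 3) (by positivity)] with p hBp hLp
  rw [Real.dist_eq] at hLp ⊢
  have hvstat := abs_vstat_sub_le (u := u) (w := w) hKL p
  have h₁ := abs_sub_le (vstat K u w p) (vstat L u w p) (∫ z, K z.1 z.2 ∂(μ.prod ν))
  have h₂ := abs_sub_le (vstat L u w p) (∫ z, L z.1 z.2 ∂(μ.prod ν)) (∫ z, K z.1 z.2 ∂(μ.prod ν))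
  rw [abs_sub_comm (∫ z, L z.1 z.2 ∂(μ.prod ν))] at h₂
  linarith

end Convergence

section Truncation

def clamp (M x : ℝ) : ℝ := max (-M) (min x M)

lemma abs_clamp_le {M : ℝ} (hM : 0 ≤ M) (x : ℝ) : |clamp M x| ≤ M :=
  abs_le.2 ⟨le_max_left _ _, max_le (by linarith) (min_le_right _ _)⟩

lemma clamp_of_abs_le {M x : ℝ} (h : |x| ≤ M) : clamp M x = x := by
  rw [clamp, min_eq_left (abs_le.1 h).2, max_eq_right (abs_le.1 h).1]

lemma continuous_clamp (M : ℝ) : Continuous (clamp M) :=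
  continuous_const.max (continuous_id.min continuous_const)

def tailRpow (α M : ℝ) : ℝ → ℝ := {x | M < |x|}.indicator fun x => |x| ^ α

lemma tailRpow_nonneg (α M x : ℝ) : 0 ≤ tailRpow α M x :=
  Set.indicator_nonneg (fun x _ => Real.rpow_nonneg (abs_nonneg x) α) x

lemma tailRpow_of_lt (α : ℝ) {M x : ℝ} (h : M < |x|) : tailRpow α M x = |x| ^ α :=
  Set.indicator_of_mem (s := {x : ℝ | M < |x|}) h _

lemma measurableSet_lt_abs (M : ℝ) : MeasurableSet {x : ℝ | M < |x|} :=
  measurableSet_lt measurable_const measurable_abs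

lemma tendsto_integral_tailRpow {α : ℝ} {μ : Measure ℝ} (h : Integrable (fun x => |x| ^ α) μ) :
    Tendsto (fun M : ℕ => ∫ x, tailRpow α M x ∂μ) atTop (𝓝 0) := by
  have hanti : Antitone fun M : ℕ => {x : ℝ | (M : ℝ) < |x|} := by
    intro M N hMN x (hx : (N : ℝ) < |x|)
    exact show (M : ℝ) < |x| from (Nat.cast_le.2 hMN).trans_lt hx
  have hempty : ⋂ M : ℕ, {x : ℝ | (M : ℝ) < |x|} = ∅ :=
    Set.eq_empty_of_forall_notMem fun x hx =>
      let ⟨M, hM⟩ := exists_nat_ge |x|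
      (Set.mem_iInter.1 hx M).not_ge hM
  simpa only [tailRpow, integral_indicator (measurableSet_lt_abs _), hempty, setIntegral_empty]
    using tendsto_setIntegral_of_antitone (fun _ => measurableSet_lt_abs _) hanti
      ⟨0, h.integrableOn⟩

lemma abs_abs_sub_rpow_sub_clamp_le {α M : ℝ} (hα : 0 < α) (hM : 0 ≤ M) (x y : ℝ) :
    |(|x - y|) ^ α - |clamp M x - clamp M y| ^ α| ≤ 2 ^ α * (tailRpow α M x + tailRpow α M y) := by
  by_cases hxy : |x| ≤ M ∧ |y| ≤ M
  · rw [clamp_of_abs_le hxy.1, clamp_of_abs_le hxy.2, sub_self, abs_zero]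
    have := tailRpow_nonneg α M x
    have := tailRpow_nonneg α M y
    positivity
  -- both kernels lie in `[0, (2 m) ^ α]`, and `m ^ α` is a tail term since `M < m`
  set m := max |x| |y|
  have hMm : M < m := by
    rw [not_and_or, not_le, not_le] at hxy
    exact hxy.elim (fun h => h.trans_le (le_max_left _ _)) (fun h => h.trans_le (le_max_right _ _))
  have hpow : ∀ a b : ℝ, |a| ≤ m → |b| ≤ m → |a - b| ^ α ≤ (2 * m) ^ α := fun a b ha hb =>
    Real.rpow_le_rpow (abs_nonneg _) ((abs_sub a b).trans (by linarith)) hα.le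
  have htail : m ^ α ≤ tailRpow α M x + tailRpow α M y := by
    rcases max_choice |x| |y| with h | h <;> change m = _ at h <;> rw [h] at hMm ⊢
    · linarith [tailRpow_of_lt α hMm, tailRpow_nonneg α M y]
    · linarith [tailRpow_of_lt α hMm, tailRpow_nonneg α M x]
  have hclamp : ∀ z, |clamp M z| ≤ m := fun z => (abs_clamp_le hM z).trans hMm.le
  calc |(|x - y|) ^ α - |clamp M x - clamp M y| ^ α| ≤ (2 * m) ^ α :=
        abs_sub_le_of_nonneg_of_le (by positivity)
          (hpow x y (le_max_left _ _) (le_max_right _ _)) (by positivity)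
          (hpow _ _ (hclamp x) (hclamp y))
    _ = 2 ^ α * m ^ α := Real.mul_rpow zero_le_two (hM.trans hMm.le)
    _ ≤ 2 ^ α * (tailRpow α M x + tailRpow α M y) := by gcongr

end Truncation

section Deterministic

variable {μ ν : Measure ℝ} {u w : ℕ → ℝ} {α : ℝ}

theorem vstatTendsto_abs_sub_rpow [IsProbabilityMeasure μ] [IsProbabilityMeasure ν] (hα : 0 < α)
    (hμ : Integrable (fun x => |x| ^ α) μ) (hν : Integrable (fun y => |y| ^ α) ν)
    (hu_tail : ∀ M : ℕ, SampleMeanTendsto μ u (tailRpow α M))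
    (hw_tail : ∀ M : ℕ, SampleMeanTendsto ν w (tailRpow α M))
    (hu_clamp : ∀ M k : ℕ, SampleMeanTendsto μ u (fun x => clamp M x ^ k))
    (hw_clamp : ∀ M k : ℕ, SampleMeanTendsto ν w (fun y => clamp M y ^ k)) :
    VStatTendsto μ ν u w (fun x y => |x - y| ^ α) := by
  have hcont : Continuous fun t : ℝ => |t| ^ α :=
    continuous_abs.rpow_const fun _ => Or.inr hα.le
  refine .of_forall_approx (hcont.comp (continuous_fst.sub continuous_snd)).aestronglyMeasurable
    fun ε hε => ?_
  obtain ⟨M, hM⟩ : ∃ M : ℕ,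
      2 ^ α * (∫ x, tailRpow α M x ∂μ + ∫ y, tailRpow α M y ∂ν) < ε / 2 := by
    have := ((tendsto_integral_tailRpow hμ).add (tendsto_integral_tailRpow hν)).const_mul (2 ^ α)
    rw [add_zero, mul_zero] at this
    exact (this.eventually (gt_mem_nhds (half_pos hε))).exists
  obtain ⟨q, hq⟩ := exists_polynomial_near_of_continuousOn (-(2 * M)) (2 * M) _
    hcont.continuousOn (ε / 2) (half_pos hε)
  have hf := ((hu_tail M).const_mul (2 ^ α)).add (.const (ε / 2))
  have hg := (hw_tail M).const_mul (2 ^ α)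
  refine ⟨fun x y => q.eval (clamp M x - clamp M y),
    fun x y => (2 ^ α * tailRpow α M x + ε / 2) + 2 ^ α * tailRpow α M y,
    .eval_sub q (hu_clamp M) (hw_clamp M), .add_sep hf hg,
    fun x y => ?_, ?_⟩
  · have hpoly : |(|clamp M x - clamp M y|) ^ α - q.eval (clamp M x - clamp M y)| < ε / 2 := by
      rw [abs_sub_comm]
      refine hq _ (abs_le.1 ((abs_sub _ _).trans ?_))
      linarith [abs_clamp_le M.cast_nonneg x, abs_clamp_le M.cast_nonneg y]
    have := abs_abs_sub_rpow_sub_clamp_le hα M.cast_nonneg x y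
    have := abs_sub_le (|x - y| ^ α) (|clamp M x - clamp M y| ^ α)
      (q.eval (clamp M x - clamp M y))
    linarith
  · rw [integral_prod_add hf.1 hg.1, integral_add ((hu_tail M).1.const_mul _) (integrable_const _),
      integral_const_mul, integral_const_mul, integral_const, probReal_univ, one_smul]
    linarith

end Deterministic

section Probability

variable {Ω : Type*} [MeasurableSpace Ω] {P : Measure Ω}

lemma ae_sampleMeanTendsto [MeasurableSpace E] {Z : ℕ → Ω → E} (hZ : ∀ i, Measurable (Z i))
    (hindep : Pairwise fun i j => IndepFun (Z i) (Z j) P) {μ : Measure E}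
    (hlaw : ∀ i, P.map (Z i) = μ) {f : E → ℝ} (hf : Measurable f) (hfi : Integrable f μ) :
    ∀ᵐ ω ∂P, SampleMeanTendsto μ (fun i => Z i ω) f := by
  have hident : ∀ i, IdentDistrib (Z i) (Z 0) P P :=
    fun i => ⟨(hZ i).aemeasurable, (hZ 0).aemeasurable, by rw [hlaw, hlaw]⟩
  have hint : Integrable (f ∘ Z 0) P := (hlaw 0 ▸ hfi).comp_measurable (hZ 0)
  have hmean : ∫ x, f x ∂μ = ∫ ω, f (Z 0 ω) ∂P := by
    rw [← hlaw 0, integral_map (hZ 0).aemeasurable hf.aestronglyMeasurable]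
  filter_upwards [strong_law_ae_real (fun i => f ∘ Z i) hint
    (fun i j hij => (hindep hij).comp hf hf) fun i => (hident i).comp hf] with ω hω
  exact ⟨hfi, hmean ▸ hω⟩

lemma integrable_clamp_pow (μ : Measure ℝ) [IsFiniteMeasure μ] {M : ℝ} (hM : 0 ≤ M) (k : ℕ) :
    Integrable (fun x => clamp M x ^ k) μ :=
  .of_bound ((continuous_clamp M).pow k).aestronglyMeasurable (M ^ k) <|
    Eventually.of_forall fun x => by
      rw [Real.norm_eq_abs, abs_pow]
      exact pow_le_pow_left₀ (abs_nonneg _) (abs_clamp_le hM x) k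

lemma ae_sampleMeanTendsto_tailRpow_clamp {α : ℝ} {Z : ℕ → Ω → ℝ} (hZ : ∀ i, Measurable (Z i))
    (hindep : Pairwise fun i j => IndepFun (Z i) (Z j) P) {μ : Measure ℝ} [IsFiniteMeasure μ]
    (hlaw : ∀ i, P.map (Z i) = μ) (hμ : Integrable (fun x => |x| ^ α) μ) :
    ∀ᵐ ω ∂P, (∀ M : ℕ, SampleMeanTendsto μ (fun i => Z i ω) (tailRpow α M)) ∧
      ∀ M k : ℕ, SampleMeanTendsto μ (fun i => Z i ω) (fun x => clamp M x ^ k) := by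
  refine (ae_all_iff.2 fun M => ?_).and (ae_all_iff.2 fun M => ae_all_iff.2 fun k => ?_)
  · exact ae_sampleMeanTendsto hZ hindep hlaw
      ((measurable_abs.pow_const α).indicator (measurableSet_lt_abs _))
      (hμ.indicator (measurableSet_lt_abs _))
  · exact ae_sampleMeanTendsto hZ hindep hlaw ((continuous_clamp M).pow k).measurable
      (integrable_clamp_pow μ M.cast_nonneg k)

theorem ae_tendsto_vstat_abs_sub_rpow [IsProbabilityMeasure P] {α : ℝ} (hα : 0 < α)
    {Z W : ℕ → Ω → ℝ} (hZ : ∀ i, Measurable (Z i)) (hW : ∀ j, Measurable (W j))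
    (hZind : Pairwise fun i j => IndepFun (Z i) (Z j) P)
    (hWind : Pairwise fun i j => IndepFun (W i) (W j) P)
    {U V : Ω → ℝ} (hU : Measurable U) (hV : Measurable V) (hUV : IndepFun U V P)
    (hZlaw : ∀ i, P.map (Z i) = P.map U) (hWlaw : ∀ j, P.map (W j) = P.map V)
    (hUmom : Integrable (fun x => |x| ^ α) (P.map U))
    (hVmom : Integrable (fun y => |y| ^ α) (P.map V)) :
    ∀ᵐ ω ∂P, Tendsto (vstat (fun x y => |x - y| ^ α) (fun i => Z i ω) (fun j => W j ω)) atTop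
      (𝓝 (∫ ω, |U ω - V ω| ^ α ∂P)) := by
  have := Measure.isProbabilityMeasure_map (μ := P) hU.aemeasurable
  have := Measure.isProbabilityMeasure_map (μ := P) hV.aemeasurable
  have hcont : Continuous fun z : ℝ × ℝ => |z.1 - z.2| ^ α :=
    (continuous_fst.sub continuous_snd).abs.rpow_const fun _ => Or.inr hα.le
  rw [hUV.integral_comp_eq_integral_prod hU.aemeasurable hV.aemeasurable
    hcont.aestronglyMeasurable]
  filter_upwards [ae_sampleMeanTendsto_tailRpow_clamp hZ hZind hZlaw hUmom,
    ae_sampleMeanTendsto_tailRpow_clamp hW hWind hWlaw hVmom] with ω hu hw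
  exact (vstatTendsto_abs_sub_rpow hα hUmom hVmom hu.1 hw.1 hu.2 hw.2).2

end Probability

end EnergyStatistic

open EnergyStatistic in
theorem sample_energy_statistic_tendsto_ae
    {Ω : Type*} [MeasurableSpace Ω] {μ : Measure Ω} [IsProbabilityMeasure μ]
    (α : ℝ) (hα : α ∈ Set.Ioo (0 : ℝ) 2)
    (X X' Y Y' : Ω → ℝ)
    (hX : Measurable X) (hX' : Measurable X') (hY : Measurable Y) (hY' : Measurable Y')
    (hcopies : iIndepFun ![X, X', Y, Y'] μ)
    (hXX' : μ.map X = μ.map X') (hYY' : μ.map Y = μ.map Y')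
    (hXmom : Integrable (fun ω => |X ω| ^ α) μ) (hYmom : Integrable (fun ω => |Y ω| ^ α) μ)
    (Xs : ℕ → Ω → ℝ) (Ys : ℕ → Ω → ℝ)
    (hXs : ∀ i, Measurable (Xs i)) (hYs : ∀ j, Measurable (Ys j))
    (hsamples : iIndepFun (Sum.elim Xs Ys) μ)
    (hXsdist : ∀ i, μ.map (Xs i) = μ.map X) (hYsdist : ∀ j, μ.map (Ys j) = μ.map Y) :
    ∀ᵐ ω ∂μ, Tendsto
      (fun p : ℕ × ℕ =>
        (2 / (p.1 * p.2 : ℝ)) * ∑ i ∈ Finset.range p.1, ∑ j ∈ Finset.range p.2,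
            |Xs i ω - Ys j ω| ^ α
        - ((p.1.choose 2 : ℝ))⁻¹ * ∑ i ∈ Finset.range p.1, ∑ j ∈ Finset.range p.1,
            (if i < j then |Xs i ω - Xs j ω| ^ α else 0)
        - ((p.2.choose 2 : ℝ))⁻¹ * ∑ i ∈ Finset.range p.2, ∑ j ∈ Finset.range p.2,
            (if i < j then |Ys i ω - Ys j ω| ^ α else 0))
      atTop
      (𝓝 (2 * (∫ ω, |X ω - Y ω| ^ α ∂μ) - (∫ ω, |X ω - X' ω| ^ α ∂μ)
        - ∫ ω, |Y ω - Y' ω| ^ α ∂μ)) := by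
  obtain ⟨hα0, -⟩ := hα
  have hmom {Z : Ω → ℝ} (hZ : Measurable Z) (h : Integrable (fun ω => |Z ω| ^ α) μ) :
      Integrable (fun x => |x| ^ α) (μ.map Z) :=
    (integrable_map_measure (measurable_abs.pow_const α).aestronglyMeasurable hZ.aemeasurable).2 h
  have hXsind : Pairwise fun i j => IndepFun (Xs i) (Xs j) μ :=
    fun i j hij => hsamples.indepFun (Sum.inl_injective.ne hij)
  have hYsind : Pairwise fun i j => IndepFun (Ys i) (Ys j) μ :=
    fun i j hij => hsamples.indepFun (Sum.inr_injective.ne hij)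
  have hindep (i j : Fin 4) (hij : i ≠ j) := hcopies.indepFun hij
  filter_upwards [ae_tendsto_vstat_abs_sub_rpow hα0 hXs hYs hXsind hYsind hX hY
      (by simpa using hindep 0 2 (by decide)) hXsdist hYsdist (hmom hX hXmom) (hmom hY hYmom),
    ae_tendsto_vstat_abs_sub_rpow hα0 hXs hXs hXsind hXsind hX hX'
      (by simpa using hindep 0 1 (by decide)) hXsdist (fun i => (hXsdist i).trans hXX')
      (hmom hX hXmom) (hXX' ▸ hmom hX hXmom),
    ae_tendsto_vstat_abs_sub_rpow hα0 hYs hYs hYsind hYsind hY hY'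
      (by simpa using hindep 2 3 (by decide)) hYsdist (fun j => (hYsdist j).trans hYY')
      (hmom hY hYmom) (hYY' ▸ hmom hY hYmom)] with ω hXY hXX hYY
  have hsymm (x y : ℝ) : |x - y| ^ α = |y - x| ^ α := by rw [abs_sub_comm]
  have hdiag (x : ℝ) : |x - x| ^ α = 0 := by simp [hα0.ne']
  rw [← prod_atTop_atTop_eq] at hXY ⊢
  exact (((hXY.const_mul 2).congr fun p => by rw [vstat]; ring).sub
    ((tendsto_ustat_of_tendsto_vstat hsymm hdiag hXX).comp tendsto_fst)).sub
    ((tendsto_ustat_of_tendsto_vstat hsymm hdiag hYY).comp tendsto_snd)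
end
end

section
/- The map d(μ,ν) = √(ℰ(X,Y)) where X ∼ μ, Y ∼ ν independent, defines a metric on the space of probability measures on ℝ with finite first moment; in particular the triangle inequality √ℰ(X,Z) ≤ √ℰ(X,Y) + √ℰ(Y,Z) holds. -/
/-! Since `|x - y| = ∫ (1{x ≤ t} - 1{y ≤ t})² dt`, integrating against `μ ⊗ ν` and swapping the
integrals (Fubini) gives Cramér's identity `ℰ(μ, ν) = 2 ∫ (F_μ - F_ν)² dt` for the distribution
functions `F_μ = cdf μ`, `F_ν = cdf ν`. Hence `√ℰ(μ, ν) = √2 ‖F_μ - F_ν‖_{L²}`, and the metric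
axioms are those of the `L²` norm; for definiteness, `F_μ = F_ν` almost everywhere forces equality
everywhere by right-continuity, and a distribution function determines its measure. -/

open MeasureTheory ProbabilityTheory
open scoped ENNReal

noncomputable section

/-- The energy distance between two probability measures on `ℝ`, expressed via
product measures: `ℰ(μ, ν) = 2 E|X-Y| - E|X-X'| - E|Y-Y'|` for independent
`X ∼ μ`, `Y ∼ ν` and independent copies `X'`, `Y'`. -/
def energyDist (μ ν : Measure ℝ) : ℝ :=
  2 * (∫ p : ℝ × ℝ, |p.1 - p.2| ∂(μ.prod ν))
    - (∫ p : ℝ × ℝ, |p.1 - p.2| ∂(μ.prod μ))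
    - ∫ p : ℝ × ℝ, |p.1 - p.2| ∂(ν.prod ν)

open Set Filter Topology

lemma eq_of_ae_eq_of_continuousWithinAt_Ici {X Y : Type*} [TopologicalSpace X] [LinearOrder X]
    [OrderTopology X] [DenselyOrdered X] [NoMaxOrder X] [MeasurableSpace X]
    [TopologicalSpace Y] [T2Space Y] {μ : Measure X} [μ.IsOpenPosMeasure] {f g : X → Y}
    (hfg : f =ᵐ[μ] g) (hf : ∀ x, ContinuousWithinAt f (Ici x) x)
    (hg : ∀ x, ContinuousWithinAt g (Ici x) x) : f = g := by
  funext x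
  set s := Ioi x ∩ {t | f t = g t}
  have : (𝓝[s] x).NeBot := by
    rw [← mem_closure_iff_nhdsWithin_neBot]
    refine closure_minimal ((Measure.dense_of_ae hfg).open_subset_closure_inter isOpen_Ioi)
      isClosed_closure ?_
    rw [closure_Ioi]
    exact mem_Ici.2 le_rfl
  have hs : s ⊆ Ici x := fun t ht => le_of_lt ht.1
  exact tendsto_nhds_unique
    (((hf x).mono hs).congr' (eventually_nhdsWithin_of_forall fun t ht => ht.2)) ((hg x).mono hs)

lemma sq_lpNorm_two {α : Type*} [MeasurableSpace α] {μ : Measure α} {f : α → ℝ}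
    (hf : AEStronglyMeasurable f μ) : lpNorm f 2 μ ^ 2 = ∫ x, f x ^ 2 ∂μ := by
  rw [lpNorm_eq_integral_norm_rpow_toReal two_ne_zero ENNReal.ofNat_ne_top hf]
  simp only [ENNReal.toReal_ofNat, Real.norm_eq_abs, Real.rpow_two, sq_abs]
  exact_mod_cast Real.rpow_inv_natCast_pow (integral_nonneg fun x => sq_nonneg (f x)) two_ne_zero

lemma sq_indicator_Ici_sub_indicator_Ici (x y t : ℝ) :
    ((Ici x).indicator (1 : ℝ → ℝ) t - (Ici y).indicator 1 t) ^ 2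
      = (Ico (min x y) (max x y)).indicator 1 t := by
  simp only [indicator_apply, mem_Ici, mem_Ico, Pi.one_apply, min_def, max_def]
  split_ifs <;> grind

lemma integrable_sq_indicator_Ici_sub_indicator_Ici (x y : ℝ) :
    Integrable (fun t => ((Ici x).indicator (1 : ℝ → ℝ) t - (Ici y).indicator 1 t) ^ 2) := by
  simp_rw [sq_indicator_Ici_sub_indicator_Ici]
  exact (integrable_indicator_iff measurableSet_Ico).2 (integrableOn_const measure_Ico_lt_top.ne)

lemma integral_sq_indicator_Ici_sub_indicator_Ici (x y : ℝ) :
    ∫ t, ((Ici x).indicator (1 : ℝ → ℝ) t - (Ici y).indicator 1 t) ^ 2 = |x - y| := by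
  simp_rw [sq_indicator_Ici_sub_indicator_Ici]
  rw [integral_indicator_one measurableSet_Ico, Real.volume_real_Ico, max_sub_min_eq_abs',
    max_eq_left (abs_nonneg _)]

section

variable {μ ν : Measure ℝ} [IsFiniteMeasure μ] [IsFiniteMeasure ν]

lemma integrable_abs_sub_prod
    (hμ : Integrable (fun x => |x|) μ) (hν : Integrable (fun x => |x|) ν) :
    Integrable (fun p : ℝ × ℝ => |p.1 - p.2|) (μ.prod ν) :=
  (((integrable_norm_iff aestronglyMeasurable_id).1 hμ).comp_fst ν).sub
    (((integrable_norm_iff aestronglyMeasurable_id).1 hν).comp_snd μ) |>.abs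

lemma integrable_sq_indicator_Ici_sub_indicator_Ici_prod
    (hμ : Integrable (fun x => |x|) μ) (hν : Integrable (fun x => |x|) ν) :
    Integrable (fun q : (ℝ × ℝ) × ℝ =>
      ((Ici q.1.1).indicator (1 : ℝ → ℝ) q.2 - (Ici q.1.2).indicator 1 q.2) ^ 2)
      ((μ.prod ν).prod volume) := by
  have hmeas (i : ℝ × ℝ → ℝ) (hi : Measurable i) :
      Measurable fun q : (ℝ × ℝ) × ℝ => (Ici (i q.1)).indicator (1 : ℝ → ℝ) q.2 :=
    measurable_const.indicator (measurableSet_le (hi.comp measurable_fst) measurable_snd)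
  refine (integrable_prod_iff (((hmeas _ measurable_fst).sub
    (hmeas _ measurable_snd)).pow_const 2).aestronglyMeasurable).2
    ⟨.of_forall fun p => integrable_sq_indicator_Ici_sub_indicator_Ici p.1 p.2, ?_⟩
  simpa [integral_sq_indicator_Ici_sub_indicator_Ici] using integrable_abs_sub_prod hμ hν

end

/-- `P(min X Y ≤ t < max X Y)` for independent `X ∼ μ`, `Y ∼ ν`. -/
def separationProb (μ ν : Measure ℝ) (t : ℝ) : ℝ :=
  cdf μ t * (1 - cdf ν t) + cdf ν t * (1 - cdf μ t)

lemma two_mul_separationProb_sub_separationProb_sub_separationProb {μ ν : Measure ℝ} (t : ℝ) :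
    2 * separationProb μ ν t - separationProb μ μ t - separationProb ν ν t
      = 2 * (cdf μ t - cdf ν t) ^ 2 := by
  simp only [separationProb]
  ring

section

variable {μ ν : Measure ℝ} [IsProbabilityMeasure μ] [IsProbabilityMeasure ν]

lemma integral_prod_sq_indicator_Ici_sub_indicator_Ici (t : ℝ) :
    ∫ p : ℝ × ℝ, ((Ici p.1).indicator (1 : ℝ → ℝ) t - (Ici p.2).indicator 1 t) ^ 2 ∂(μ.prod ν)
      = separationProb μ ν t := by
  have hsplit (x y : ℝ) : ((Ici x).indicator (1 : ℝ → ℝ) t - (Ici y).indicator 1 t) ^ 2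
      = (Iic t).indicator 1 x * (Ioi t).indicator 1 y
        + (Ioi t).indicator 1 x * (Iic t).indicator 1 y := by
    simp only [indicator_apply, mem_Ici, mem_Iic, mem_Ioi, Pi.one_apply]; split_ifs <;> grind
  have hint (s u : Set ℝ) (hs : MeasurableSet s) (hu : MeasurableSet u) :
      Integrable (fun p : ℝ × ℝ => s.indicator (1 : ℝ → ℝ) p.1 * u.indicator 1 p.2) (μ.prod ν) :=
    ((integrable_const 1).indicator hs).mul_prod ((integrable_const 1).indicator hu)
  have hcompl (ρ : Measure ℝ) [IsProbabilityMeasure ρ] : ρ.real (Ioi t) = 1 - cdf ρ t := by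
    rw [← compl_Iic, probReal_compl_eq_one_sub measurableSet_Iic, cdf_eq_real]
  simp_rw [hsplit]
  rw [integral_add (hint _ _ measurableSet_Iic measurableSet_Ioi)
      (hint _ _ measurableSet_Ioi measurableSet_Iic),
    integral_prod_mul, integral_prod_mul]
  simp only [integral_indicator_one measurableSet_Iic, integral_indicator_one measurableSet_Ioi,
    hcompl, cdf_eq_real, separationProb]
  ring

lemma integral_abs_sub_prod_eq_integral_separationProb
    (hμ : Integrable (fun x => |x|) μ) (hν : Integrable (fun x => |x|) ν) :
    ∫ p : ℝ × ℝ, |p.1 - p.2| ∂(μ.prod ν) = ∫ t, separationProb μ ν t := by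
  simp_rw [← integral_sq_indicator_Ici_sub_indicator_Ici,
    ← integral_prod_sq_indicator_Ici_sub_indicator_Ici (μ := μ) (ν := ν)]
  exact integral_integral_swap (integrable_sq_indicator_Ici_sub_indicator_Ici_prod hμ hν)

lemma integrable_separationProb
    (hμ : Integrable (fun x => |x|) μ) (hν : Integrable (fun x => |x|) ν) :
    Integrable (separationProb μ ν) := by
  simpa only [integral_prod_sq_indicator_Ici_sub_indicator_Ici] using
    (integrable_sq_indicator_Ici_sub_indicator_Ici_prod hμ hν).integral_prod_right

lemma energyDist_eq_two_mul_integral_sq_cdf_sub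
    (hμ : Integrable (fun x => |x|) μ) (hν : Integrable (fun x => |x|) ν) :
    energyDist μ ν = 2 * ∫ t, (cdf μ t - cdf ν t) ^ 2 := by
  have hμν := (integrable_separationProb hμ hν).const_mul 2
  rw [energyDist, integral_abs_sub_prod_eq_integral_separationProb hμ hν,
    integral_abs_sub_prod_eq_integral_separationProb hμ hμ,
    integral_abs_sub_prod_eq_integral_separationProb hν hν, ← integral_const_mul,
    ← integral_sub hμν (integrable_separationProb hμ hμ),
    ← integral_sub (f := fun t => 2 * separationProb μ ν t - separationProb μ μ t)
      (hμν.sub (integrable_separationProb hμ hμ)) (integrable_separationProb hν hν),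
    ← integral_const_mul]
  simp only [two_mul_separationProb_sub_separationProb_sub_separationProb]

lemma memLp_cdf_sub (hμ : Integrable (fun x => |x|) μ) (hν : Integrable (fun x => |x|) ν) :
    MemLp (⇑(cdf μ) - ⇑(cdf ν)) 2 := by
  refine (memLp_two_iff_integrable_sq
    ((cdf μ).mono.measurable.sub (cdf ν).mono.measurable).aestronglyMeasurable).2 ?_
  refine (((((integrable_separationProb hμ hν).const_mul 2).sub
    (integrable_separationProb hμ hμ)).sub
    (integrable_separationProb hν hν)).div_const 2).congr (.of_forall fun t => ?_)
  simp only [Pi.sub_apply, two_mul_separationProb_sub_separationProb_sub_separationProb]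
  ring

lemma energyDist_eq_two_mul_sq_lpNorm
    (hμ : Integrable (fun x => |x|) μ) (hν : Integrable (fun x => |x|) ν) :
    energyDist μ ν = 2 * lpNorm (⇑(cdf μ) - ⇑(cdf ν)) 2 volume ^ 2 := by
  rw [sq_lpNorm_two (memLp_cdf_sub hμ hν).aestronglyMeasurable,
    energyDist_eq_two_mul_integral_sq_cdf_sub hμ hν]
  rfl

lemma energyDist_eq_zero_iff
    (hμ : Integrable (fun x => |x|) μ) (hν : Integrable (fun x => |x|) ν) :
    energyDist μ ν = 0 ↔ μ = ν := by
  refine ⟨fun h => ?_, fun h => by subst h; simp only [energyDist]; ring⟩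
  have hae : ⇑(cdf μ) - ⇑(cdf ν) =ᵐ[volume] 0 := by
    rw [energyDist_eq_two_mul_sq_lpNorm hμ hν] at h
    rw [← lpNorm_eq_zero (memLp_cdf_sub hμ hν) two_ne_zero]
    simpa using h
  have hcdf : ⇑(cdf μ) = ⇑(cdf ν) := eq_of_ae_eq_of_continuousWithinAt_Ici
    (hae.mono fun t ht => sub_eq_zero.1 ht) (cdf μ).right_continuous (cdf ν).right_continuous
  exact Measure.eq_of_cdf μ ν (StieltjesFunction.ext (congrFun hcdf))

lemma sqrt_energyDist_eq
    (hμ : Integrable (fun x => |x|) μ) (hν : Integrable (fun x => |x|) ν) :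
    √(energyDist μ ν) = √2 * lpNorm (⇑(cdf μ) - ⇑(cdf ν)) 2 volume := by
  rw [energyDist_eq_two_mul_sq_lpNorm hμ hν, Real.sqrt_mul zero_le_two,
    Real.sqrt_sq lpNorm_nonneg]

lemma sqrt_energyDist_le_add {ρ : Measure ℝ} [IsProbabilityMeasure ρ]
    (hμ : Integrable (fun x => |x|) μ) (hν : Integrable (fun x => |x|) ν)
    (hρ : Integrable (fun x => |x|) ρ) :
    √(energyDist μ ρ) ≤ √(energyDist μ ν) + √(energyDist ν ρ) := by
  rw [sqrt_energyDist_eq hμ hρ, sqrt_energyDist_eq hμ hν, sqrt_energyDist_eq hν hρ, ← mul_add,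
    ← sub_add_sub_cancel (cdf μ : ℝ → ℝ) (cdf ν) (cdf ρ)]
  gcongr
  exact lpNorm_add_le (memLp_cdf_sub hμ hν) one_le_two

end

theorem sqrt_energyDist_is_metric
    (μ ν ρ : Measure ℝ)
    [IsProbabilityMeasure μ] [IsProbabilityMeasure ν] [IsProbabilityMeasure ρ]
    (hμ : Integrable (fun x => |x|) μ) (hν : Integrable (fun x => |x|) ν)
    (hρ : Integrable (fun x => |x|) ρ) :
    0 ≤ energyDist μ ν ∧
    (energyDist μ ν = 0 ↔ μ = ν) ∧
    energyDist μ ν = energyDist ν μ ∧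
    Real.sqrt (energyDist μ ρ) ≤ Real.sqrt (energyDist μ ν) + Real.sqrt (energyDist ν ρ) := by
  refine ⟨?_, energyDist_eq_zero_iff hμ hν, ?_, sqrt_energyDist_le_add hμ hν hρ⟩
  · rw [energyDist_eq_two_mul_sq_lpNorm hμ hν]
    positivity
  · rw [energyDist_eq_two_mul_sq_lpNorm hμ hν, energyDist_eq_two_mul_sq_lpNorm hν hμ,
      lpNorm_sub_comm]
end
end

section
/- The function x ↦ |x|^α on ℝ is negative definite for α ∈ (0,2]: for any points x₁,…,xₙ ∈ ℝ and real coefficients c₁,…,cₙ with ∑cᵢ = 0, one has ∑_{i,j} cᵢ cⱼ |xᵢ − xⱼ|^α ≤ 0. -/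
/-!
For `0 < α < 2` the scaling `u ↦ u / |t|` gives
`∫₀^∞ (1 - cos (t u)) u^(-α-1) du = C |t|^α` with `C > 0`, and when `∑ cᵢ = 0`,
`∑ᵢ ∑ⱼ cᵢ cⱼ (1 - cos (xᵢ - xⱼ)) = -(∑ cᵢ cos xᵢ)² - (∑ cᵢ sin xᵢ)² ≤ 0`;
integrating this against the nonnegative weight `u^(-α-1)` gives the claim.
For `α = 2` directly `∑ᵢ ∑ⱼ cᵢ cⱼ (xᵢ - xⱼ)² = -2 (∑ cᵢ xᵢ)²`.
-/
open Finset MeasureTheory Real Set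

def IsCondNegDef {G : Type*} [AddGroup G] (f : G → ℝ) : Prop :=
  ∀ (n : ℕ) (x : Fin n → G) (c : Fin n → ℝ), ∑ i, c i = 0 →
    ∑ i, ∑ j, c i * c j * f (x i - x j) ≤ 0

namespace IsCondNegDef

variable {G : Type*} [AddGroup G] {f : G → ℝ}

theorem comp_addMonoidHom {H : Type*} [AddGroup H] (hf : IsCondNegDef f) (φ : H →+ G) :
    IsCondNegDef (f ∘ φ) := by
  intro n x c hc
  simpa only [Function.comp_apply, map_sub] using hf n (φ ∘ x) c hc

theorem mul_const (hf : IsCondNegDef f) {a : ℝ} (ha : 0 ≤ a) :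
    IsCondNegDef fun t => f t * a := by
  intro n x c hc
  have h : ∑ i, ∑ j, c i * c j * (f (x i - x j) * a) =
      (∑ i, ∑ j, c i * c j * f (x i - x j)) * a := by
    simp only [sum_mul, mul_assoc]
  rw [h]
  exact mul_nonpos_of_nonpos_of_nonneg (hf n x c hc) ha

theorem integral {X : Type*} [MeasurableSpace X] {μ : Measure X} {g : G → X → ℝ}
    (hg : ∀ᵐ u ∂μ, IsCondNegDef (g · u)) (hint : ∀ t, Integrable (g t) μ) :
    IsCondNegDef fun t => ∫ u, g t u ∂μ := by
  intro n x c hc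
  have h : ∑ i, ∑ j, c i * c j * ∫ u, g (x i - x j) u ∂μ =
      ∫ u, ∑ i, ∑ j, c i * c j * g (x i - x j) u ∂μ := by
    rw [integral_finsetSum _ fun i _ => integrable_finsetSum _ fun j _ => (hint _).const_mul _]
    refine sum_congr rfl fun i _ => ?_
    rw [integral_finsetSum _ fun j _ => (hint _).const_mul _]
    simp only [integral_const_mul]
  rw [h]
  refine integral_nonpos_of_ae ?_
  filter_upwards [hg] with u hu using hu n x c hc

end IsCondNegDef

theorem isCondNegDef_sq : IsCondNegDef fun t : ℝ => t ^ 2 := by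
  intro n x c hc
  have h : ∑ i, ∑ j, c i * c j * (x i - x j) ^ 2 =
      (∑ i, c i * x i ^ 2) * (∑ j, c j) + (∑ i, c i) * (∑ j, c j * x j ^ 2) -
        2 * ((∑ i, c i * x i) * (∑ j, c j * x j)) := by
    rw [sum_mul_sum, sum_mul_sum, sum_mul_sum]
    simp only [mul_sum, ← sum_add_distrib, ← sum_sub_distrib]
    exact sum_congr rfl fun i _ => sum_congr rfl fun j _ => by ring
  rw [h, hc]
  nlinarith [sq_nonneg (∑ i, c i * x i)]

theorem isCondNegDef_one_sub_cos : IsCondNegDef fun t : ℝ => 1 - cos t := by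
  intro n x c hc
  have h : ∑ i, ∑ j, c i * c j * (1 - cos (x i - x j)) =
      (∑ i, c i) ^ 2 - (∑ i, c i * cos (x i)) ^ 2 - (∑ i, c i * sin (x i)) ^ 2 := by
    simp only [sq, sum_mul_sum, ← sum_sub_distrib, cos_sub]
    exact sum_congr rfl fun i _ => sum_congr rfl fun j _ => by ring
  rw [h, hc]
  nlinarith [sq_nonneg (∑ i, c i * cos (x i)), sq_nonneg (∑ i, c i * sin (x i))]

section OneSubCosKernel

variable {α : ℝ}

theorem integrableOn_one_sub_cos_mul_mul_rpow (h0 : 0 < α) (h2 : α < 2) (t : ℝ) :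
    IntegrableOn (fun u => (1 - cos (t * u)) * u ^ (-α - 1)) (Ioi 0) := by
  have hcont : ContinuousOn (fun u => (1 - cos (t * u)) * u ^ (-α - 1)) (Ioi 0) :=
    (by fun_prop : Continuous fun u => 1 - cos (t * u)).continuousOn.mul
      (continuousOn_id.rpow_const fun u hu => Or.inl (ne_of_gt hu))
  have hbound : ∀ {s : Set ℝ} {b : ℝ → ℝ}, s ⊆ Ioi 0 → MeasurableSet s →
      IntegrableOn (fun u => b u * u ^ (-α - 1)) s → (∀ u ∈ s, 1 - cos (t * u) ≤ b u) →
      IntegrableOn (fun u => (1 - cos (t * u)) * u ^ (-α - 1)) s := by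
    intro s b hs hms hb hle
    refine hb.mono' ((hcont.mono hs).aestronglyMeasurable hms) ?_
    filter_upwards [ae_restrict_mem hms] with u hu
    have hw : 0 ≤ u ^ (-α - 1) := rpow_nonneg (hs hu).le _
    rw [norm_of_nonneg (mul_nonneg (by linarith [cos_le_one (t * u)]) hw)]
    exact mul_le_mul_of_nonneg_right (hle u hu) hw
  rw [← Ioc_union_Ioi_eq_Ioi zero_le_one]
  refine (hbound Ioc_subset_Ioi_self measurableSet_Ioc (b := fun u => t ^ 2 / 2 * u ^ 2) ?_
    fun u _ => ?_).union (hbound (Ioi_subset_Ioi zero_le_one) measurableSet_Ioi (b := fun _ => 2)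
      ((integrableOn_Ioi_rpow_of_lt (by linarith) zero_lt_one).const_mul 2)
      fun u _ => by linarith [neg_one_le_cos (t * u)])
  · have hpow : IntegrableOn (fun u : ℝ => u ^ (1 - α)) (Ioc 0 1) := by
      rw [← intervalIntegrable_iff_integrableOn_Ioc_of_le zero_le_one]
      exact intervalIntegral.intervalIntegrable_rpow' (by linarith)
    refine IntegrableOn.congr_fun (hpow.const_mul (t ^ 2 / 2)) (fun u hu => ?_) measurableSet_Ioc
    rw [mul_assoc, ← rpow_two u, ← rpow_add hu.1]
    ring_nf
  · linarith [one_sub_sq_div_two_le_cos (x := t * u), mul_pow t u 2]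

theorem integral_one_sub_cos_mul_mul_rpow (h0 : 0 < α) (t : ℝ) :
    ∫ u in Ioi 0, (1 - cos (t * u)) * u ^ (-α - 1) =
      |t| ^ α * ∫ u in Ioi 0, (1 - cos u) * u ^ (-α - 1) := by
  rcases eq_or_ne t 0 with rfl | ht
  · simp [zero_rpow h0.ne']
  set s := |t|
  have hs : 0 < s := abs_pos.mpr ht
  have hpoint : ∀ u ∈ Ioi (0 : ℝ), (1 - cos (t * u)) * u ^ (-α - 1) =
      s ^ (α + 1) * ((1 - cos (s * u)) * (s * u) ^ (-α - 1)) := by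
    intro u hu
    have hcos : cos (t * u) = cos (s * u) := by
      rw [← cos_abs, abs_mul, abs_of_pos (mem_Ioi.mp hu)]
    have hscale : s ^ (α + 1) * s ^ (-α - 1) = 1 := by
      rw [← rpow_add hs]; simp
    rw [hcos, mul_rpow hs.le (le_of_lt hu)]
    linear_combination (1 - cos (s * u)) * u ^ (-α - 1) * hscale.symm
  calc ∫ u in Ioi 0, (1 - cos (t * u)) * u ^ (-α - 1)
      = s ^ (α + 1) * ∫ u in Ioi 0, (1 - cos (s * u)) * (s * u) ^ (-α - 1) := by
        rw [setIntegral_congr_fun measurableSet_Ioi hpoint, integral_const_mul]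
    _ = s ^ (α + 1) * (s⁻¹ * ∫ u in Ioi 0, (1 - cos u) * u ^ (-α - 1)) := by
        rw [integral_comp_mul_left_Ioi (fun v => (1 - cos v) * v ^ (-α - 1)) 0 hs, mul_zero,
          smul_eq_mul]
    _ = s ^ α * ∫ u in Ioi 0, (1 - cos u) * u ^ (-α - 1) := by
        rw [rpow_add_one hs.ne']; field_simp

theorem integral_one_sub_cos_mul_rpow_pos (h0 : 0 < α) (h2 : α < 2) :
    0 < ∫ u in Ioi 0, (1 - cos u) * u ^ (-α - 1) := by
  have hint := integrableOn_one_sub_cos_mul_mul_rpow h0 h2 1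
  simp only [one_mul] at hint
  have hnonneg : 0 ≤ᵐ[volume.restrict (Ioi 0)] fun u => (1 - cos u) * u ^ (-α - 1) := by
    filter_upwards [ae_restrict_mem measurableSet_Ioi] with u hu
    exact mul_nonneg (by linarith [cos_le_one u]) (rpow_nonneg (le_of_lt hu) _)
  rw [setIntegral_pos_iff_support_of_nonneg_ae hnonneg hint]
  have hsupp : Ioo 0 π ⊆ Function.support (fun u => (1 - cos u) * u ^ (-α - 1)) ∩ Ioi 0 := by
    intro u ⟨hu0, huπ⟩
    have hcos : cos u < 1 := by
      simpa using cos_lt_cos_of_nonneg_of_le_pi le_rfl huπ.le hu0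
    exact ⟨(mul_pos (by linarith) (rpow_pos_of_pos hu0 _)).ne', hu0⟩
  calc (0 : ENNReal) < volume (Ioo 0 π) := by simp [pi_pos]
    _ ≤ _ := measure_mono hsupp

end OneSubCosKernel

theorem isCondNegDef_abs_rpow {α : ℝ} (h0 : 0 < α) (h2 : α ≤ 2) :
    IsCondNegDef fun t : ℝ => |t| ^ α := by
  rcases h2.eq_or_lt with rfl | h2
  · simpa only [rpow_two, sq_abs] using isCondNegDef_sq
  have hC := integral_one_sub_cos_mul_rpow_pos h0 h2
  have hrep : (fun t : ℝ => |t| ^ α) = fun t =>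
      (∫ u in Ioi 0, (1 - cos (t * u)) * u ^ (-α - 1)) *
        (∫ u in Ioi 0, (1 - cos u) * u ^ (-α - 1))⁻¹ := by
    funext t
    rw [integral_one_sub_cos_mul_mul_rpow h0 t, mul_inv_cancel_right₀ hC.ne']
  rw [hrep]
  refine (IsCondNegDef.integral ?_ (integrableOn_one_sub_cos_mul_mul_rpow h0 h2)).mul_const
    (inv_nonneg.2 hC.le)
  filter_upwards [ae_restrict_mem measurableSet_Ioi] with u hu
  exact (isCondNegDef_one_sub_cos.comp_addMonoidHom (AddMonoidHom.mulRight u)).mul_const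
    (rpow_nonneg (le_of_lt hu) _)

theorem abs_rpow_negative_definite
    (α : ℝ) (hα : α ∈ Set.Ioc (0 : ℝ) 2)
    (n : ℕ) (x : Fin n → ℝ) (c : Fin n → ℝ) (hc : ∑ i, c i = 0) :
    ∑ i, ∑ j, c i * c j * |x i - x j| ^ α ≤ 0 :=
  isCondNegDef_abs_rpow hα.1 hα.2 n x c hc
end

section
/- For independent integrable random variables X, Y with independent copies X', Y', E|X−Y| ≥ (1/2)(E|X−X'| + E|Y−Y'|), i.e., the between-distance dominates the average of the within-distances; equivalently ℰ(X,Y) ≥ 0 with equality iff X and Y are identically distributed. -/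
/-!
Writing `|a - b|` as the Lebesgue measure of `[min a b, max a b)` and applying Tonelli gives,
for independent `A` and `B` with distribution functions `F_A` and `F_B`,
`E|A - B| = ∫ (F_A (1 - F_B) + (1 - F_A) F_B) dt`. Substituting this three times, with
`F_X' = F_X` and `F_Y' = F_Y`, the combination `2 E|X - Y| - E|X - X'| - E|Y - Y'|` becomes
`2 ∫ (F_X - F_Y)² dt`. This is nonnegative, and it vanishes only if `F_X = F_Y` almost
everywhere, hence everywhere since both are right-continuous.
-/

open MeasureTheory ProbabilityTheory Set Filter Topology

lemma ENNReal.ofReal_abs_sub (a b : ℝ) :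
    ENNReal.ofReal |a - b| = ENNReal.ofReal (b - a) + ENNReal.ofReal (a - b) := by
  rcases le_total a b with h | h
  · simp [abs_of_nonpos (sub_nonpos.2 h), ENNReal.ofReal_of_nonpos (sub_nonpos.2 h)]
  · simp [abs_of_nonneg (sub_nonneg.2 h), ENNReal.ofReal_of_nonpos (sub_nonpos.2 h)]

theorem StieltjesFunction.eq_of_ae_eq {f g : StieltjesFunction ℝ} (h : f =ᵐ[volume] g) :
    f = g := by
  ext t
  by_contra hne
  have hne_near : ∀ᶠ s in 𝓝[≥] t, f s ≠ g s :=
    (((f.right_continuous t).sub (g.right_continuous t)).eventually_ne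
      (sub_ne_zero.2 hne)).mono fun s hs => sub_ne_zero.1 hs
  obtain ⟨u, htu, hsub⟩ := mem_nhdsGE_iff_exists_Ico_subset.1 hne_near
  have hnull : volume (Ico t u) = 0 := measure_mono_null hsub (ae_iff.1 h)
  exact not_le.2 htu (by simpa [Real.volume_Ico] using hnull)

lemma measurable_measure_Iic (ν : Measure ℝ) : Measurable fun t => ν (Iic t) :=
  Monotone.measurable fun _ _ h => measure_mono (Iic_subset_Iic.2 h)

lemma measurable_measure_Ioi (ν : Measure ℝ) : Measurable fun t => ν (Ioi t) :=
  Antitone.measurable fun _ _ h => measure_mono (Ioi_subset_Ioi h)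

namespace ProbabilityTheory

section Measures

variable (ν ρ : Measure ℝ)

/-- The probability that `t` separates independent samples `a ∼ ν` and `b ∼ ρ`, i.e. that
`min a b ≤ t < max a b`. -/
noncomputable def separationProb (t : ℝ) : ℝ :=
  cdf ν t * (1 - cdf ρ t) + (1 - cdf ν t) * cdf ρ t

lemma measurable_separationProb : Measurable (separationProb ν ρ) := by
  have := (monotone_cdf ν).measurable; have := (monotone_cdf ρ).measurable
  unfold separationProb
  fun_prop

lemma two_mul_separationProb_sub (t : ℝ) :
    2 * separationProb ν ρ t - separationProb ν ν t - separationProb ρ ρ t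
      = 2 * (cdf ν t - cdf ρ t) ^ 2 := by
  unfold separationProb
  ring

lemma sq_cdf_sub_le_separationProb (t : ℝ) :
    (cdf ν t - cdf ρ t) ^ 2 ≤ separationProb ν ρ t := by
  have := cdf_le_one ν t; have := cdf_le_one ρ t
  have := cdf_nonneg ν t; have := cdf_nonneg ρ t
  unfold separationProb
  nlinarith

lemma separationProb_nonneg (t : ℝ) : 0 ≤ separationProb ν ρ t :=
  (sq_nonneg _).trans (sq_cdf_sub_le_separationProb ν ρ t)

lemma ofReal_separationProb [IsProbabilityMeasure ν] [IsProbabilityMeasure ρ] (t : ℝ) :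
    ENNReal.ofReal (separationProb ν ρ t) = ν (Iic t) * ρ (Ioi t) + ν (Ioi t) * ρ (Iic t) := by
  have measure_Ioi (κ : Measure ℝ) [IsProbabilityMeasure κ] :
      κ (Ioi t) = ENNReal.ofReal (1 - cdf κ t) := by
    rw [← compl_Iic, prob_compl_eq_one_sub measurableSet_Iic, ← ofReal_cdf,
      ENNReal.ofReal_sub _ (cdf_nonneg κ t), ENNReal.ofReal_one]
  have hν := cdf_nonneg ν t
  have hρ := cdf_nonneg ρ t
  have hν' := sub_nonneg.2 (cdf_le_one ν t)
  have hρ' := sub_nonneg.2 (cdf_le_one ρ t)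
  rw [separationProb, ENNReal.ofReal_add (mul_nonneg hν hρ') (mul_nonneg hν' hρ),
    ENNReal.ofReal_mul hν, ENNReal.ofReal_mul hν', ofReal_cdf, ofReal_cdf, measure_Ioi,
    measure_Ioi]

lemma lintegral_ofReal_sub_prod [SFinite ν] [SFinite ρ] :
    ∫⁻ p, ENNReal.ofReal (p.2 - p.1) ∂(ν.prod ρ) = ∫⁻ t, ν (Iic t) * ρ (Ioi t) := by
  set E : Set ((ℝ × ℝ) × ℝ) := {q | q.1.1 ≤ q.2 ∧ q.2 < q.1.2}
  have hE : MeasurableSet E :=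
    (measurableSet_le measurable_fst.fst measurable_snd).inter
      (measurableSet_lt measurable_snd measurable_fst.snd)
  calc ∫⁻ p, ENNReal.ofReal (p.2 - p.1) ∂(ν.prod ρ)
      = ∫⁻ p, volume (Prod.mk p ⁻¹' E) ∂(ν.prod ρ) := by
        simp_rw [← Real.volume_Ico]; rfl
    _ = ((ν.prod ρ).prod volume) E := (Measure.prod_apply hE).symm
    _ = ∫⁻ t, (ν.prod ρ) (Iic t ×ˢ Ioi t) := Measure.prod_apply_symm hE
    _ = ∫⁻ t, ν (Iic t) * ρ (Ioi t) := by simp_rw [Measure.prod_prod]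

lemma lintegral_ofReal_abs_sub_prod [SFinite ν] [SFinite ρ] :
    ∫⁻ p, ENNReal.ofReal |p.1 - p.2| ∂(ν.prod ρ)
      = ∫⁻ t, (ν (Iic t) * ρ (Ioi t) + ν (Ioi t) * ρ (Iic t)) := by
  simp_rw [ENNReal.ofReal_abs_sub]
  rw [lintegral_add_left (by fun_prop), lintegral_ofReal_sub_prod,
    lintegral_add_left (f := fun t => ν (Iic t) * ρ (Ioi t))
      ((measurable_measure_Iic ν).mul (measurable_measure_Ioi ρ))]
  congr 1
  rw [← lintegral_prod_swap]
  simp only [Prod.fst_swap, Prod.snd_swap]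
  rw [lintegral_ofReal_sub_prod]
  simp_rw [mul_comm]

lemma integrable_sq_cdf_sub (h : Integrable (separationProb ν ρ)) :
    Integrable fun t => (cdf ν t - cdf ρ t) ^ 2 := by
  have := (monotone_cdf ν).measurable; have := (monotone_cdf ρ).measurable
  refine h.mono' (by fun_prop) (ae_of_all _ fun t => ?_)
  rw [Real.norm_of_nonneg (sq_nonneg _)]
  exact sq_cdf_sub_le_separationProb ν ρ t

lemma two_mul_integral_separationProb_sub (hνρ : Integrable (separationProb ν ρ))
    (hνν : Integrable (separationProb ν ν)) (hρρ : Integrable (separationProb ρ ρ)) :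
    2 * (∫ t, separationProb ν ρ t) - (∫ t, separationProb ν ν t) - ∫ t, separationProb ρ ρ t
      = 2 * ∫ t, (cdf ν t - cdf ρ t) ^ 2 := by
  rw [← integral_const_mul, ← integral_const_mul, ← integral_sub (hνρ.const_mul 2) hνν,
    ← integral_sub (f := fun t => 2 * separationProb ν ρ t - separationProb ν ν t)
      ((hνρ.const_mul 2).sub hνν) hρρ]
  simp_rw [two_mul_separationProb_sub]

lemma integral_sq_cdf_sub_eq_zero_iff [IsProbabilityMeasure ν] [IsProbabilityMeasure ρ]
    (h : Integrable fun t => (cdf ν t - cdf ρ t) ^ 2) :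
    ∫ t, (cdf ν t - cdf ρ t) ^ 2 = 0 ↔ ν = ρ := by
  rw [integral_eq_zero_iff_of_nonneg (fun t => sq_nonneg _) h, ← Measure.cdf_eq_iff]
  refine ⟨fun hsq => StieltjesFunction.eq_of_ae_eq ?_, fun hcdf => ?_⟩
  · filter_upwards [hsq] with t ht
    exact sub_eq_zero.1 (pow_eq_zero_iff two_ne_zero |>.1 ht)
  · filter_upwards with t
    simp [hcdf]

end Measures

section RandomVariables

variable {Ω : Type*} [MeasurableSpace Ω] {μ : Measure Ω} [IsProbabilityMeasure μ] {A B : Ω → ℝ}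

lemma IndepFun.lintegral_ofReal_abs_sub_s18 (hAB : IndepFun A B μ) (hA : AEMeasurable A μ)
    (hB : AEMeasurable B μ) :
    ∫⁻ ω, ENNReal.ofReal |A ω - B ω| ∂μ
      = ∫⁻ t, ENNReal.ofReal (separationProb (μ.map A) (μ.map B) t) := by
  have := Measure.isProbabilityMeasure_map (μ := μ) hA
  have := Measure.isProbabilityMeasure_map (μ := μ) hB
  calc ∫⁻ ω, ENNReal.ofReal |A ω - B ω| ∂μ
      = ∫⁻ p, ENNReal.ofReal |p.1 - p.2| ∂(μ.map fun ω => (A ω, B ω)) :=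
        (lintegral_map' (measurable_fst.sub measurable_snd).abs.ennreal_ofReal.aemeasurable
          (hA.prodMk hB)).symm
    _ = ∫⁻ p, ENNReal.ofReal |p.1 - p.2| ∂((μ.map A).prod (μ.map B)) := by
        rw [(indepFun_iff_map_prod_eq_prod_map_map hA hB).1 hAB]
    _ = _ := by simp_rw [lintegral_ofReal_abs_sub_prod, ofReal_separationProb]

lemma IndepFun.integral_abs_sub_s18 (hAB : IndepFun A B μ) (hA : AEMeasurable A μ)
    (hB : AEMeasurable B μ) :
    ∫ ω, |A ω - B ω| ∂μ = ∫ t, separationProb (μ.map A) (μ.map B) t := by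
  rw [integral_eq_lintegral_of_nonneg_ae (ae_of_all _ fun _ => abs_nonneg _) (by fun_prop),
    integral_eq_lintegral_of_nonneg_ae (ae_of_all _ (separationProb_nonneg _ _))
      (measurable_separationProb _ _).aestronglyMeasurable, hAB.lintegral_ofReal_abs_sub_s18 hA hB]

lemma IndepFun.integrable_separationProb (hAB : IndepFun A B μ) (hA : Integrable A μ)
    (hB : Integrable B μ) : Integrable (separationProb (μ.map A) (μ.map B)) := by
  refine ⟨(measurable_separationProb _ _).aestronglyMeasurable,
    (hasFiniteIntegral_iff_ofReal (ae_of_all _ (separationProb_nonneg _ _))).2 ?_⟩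
  rw [← hAB.lintegral_ofReal_abs_sub_s18 hA.aemeasurable hB.aemeasurable]
  exact (hasFiniteIntegral_iff_ofReal (ae_of_all _ fun _ => abs_nonneg _)).1 (hA.sub hB).abs.2

end RandomVariables

end ProbabilityTheory

theorem between_distance_dominates_within
    {Ω : Type*} [MeasurableSpace Ω] {μ : Measure Ω} [IsProbabilityMeasure μ]
    (X X' Y Y' : Ω → ℝ)
    (hX : Measurable X) (hX' : Measurable X') (hY : Measurable Y) (hY' : Measurable Y')
    (hindep : iIndepFun ![X, X', Y, Y'] μ)
    (hXX' : μ.map X = μ.map X') (hYY' : μ.map Y = μ.map Y')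
    (hXint : Integrable X μ) (hYint : Integrable Y μ) :
    (1 / 2) * ((∫ ω, |X ω - X' ω| ∂μ) + ∫ ω, |Y ω - Y' ω| ∂μ) ≤ ∫ ω, |X ω - Y ω| ∂μ ∧
    (2 * (∫ ω, |X ω - Y ω| ∂μ) - (∫ ω, |X ω - X' ω| ∂μ) - (∫ ω, |Y ω - Y' ω| ∂μ) = 0
      ↔ μ.map X = μ.map Y) := by
  have := Measure.isProbabilityMeasure_map (μ := μ) hX.aemeasurable
  have := Measure.isProbabilityMeasure_map (μ := μ) hY.aemeasurable
  have hXY : IndepFun X Y μ := by simpa using hindep.indepFun (show (0 : Fin 4) ≠ 2 by decide)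
  have hXX'i : IndepFun X X' μ := by simpa using hindep.indepFun (show (0 : Fin 4) ≠ 1 by decide)
  have hYY'i : IndepFun Y Y' μ := by simpa using hindep.indepFun (show (2 : Fin 4) ≠ 3 by decide)
  have hX'int : Integrable X' μ :=
    (IdentDistrib.mk hX.aemeasurable hX'.aemeasurable hXX').integrable_iff.1 hXint
  have hY'int : Integrable Y' μ :=
    (IdentDistrib.mk hY.aemeasurable hY'.aemeasurable hYY').integrable_iff.1 hYint
  have hνρ := hXY.integrable_separationProb hXint hYint
  have hνν := hXX'i.integrable_separationProb hXint hX'int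
  have hρρ := hYY'i.integrable_separationProb hYint hY'int
  rw [← hXX'] at hνν
  rw [← hYY'] at hρρ
  have henergy : 2 * (∫ ω, |X ω - Y ω| ∂μ) - (∫ ω, |X ω - X' ω| ∂μ) - (∫ ω, |Y ω - Y' ω| ∂μ)
      = 2 * ∫ t, (cdf (μ.map X) t - cdf (μ.map Y) t) ^ 2 := by
    rw [hXY.integral_abs_sub_s18 hX.aemeasurable hY.aemeasurable,
      hXX'i.integral_abs_sub_s18 hX.aemeasurable hX'.aemeasurable,
      hYY'i.integral_abs_sub_s18 hY.aemeasurable hY'.aemeasurable, ← hXX', ← hYY']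
    exact two_mul_integral_separationProb_sub _ _ hνρ hνν hρρ
  refine ⟨?_, by rw [henergy, mul_eq_zero, or_iff_right two_ne_zero,
    integral_sq_cdf_sub_eq_zero_iff _ _ (integrable_sq_cdf_sub _ _ hνρ)]⟩
  have hsq_nonneg : 0 ≤ ∫ t, (cdf (μ.map X) t - cdf (μ.map Y) t) ^ 2 :=
    integral_nonneg fun t => sq_nonneg _
  linarith
end
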